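/- arXiv:2105.05987 — 5 statements merged into one kernel-verified Lean document; each statement's English description precedes it below -/
import Mathlib

section
/- There exists a temporal path on which the two-player temporal diffusion game admits no Nash equilibrium. Concretely, for the temporal path P = ([6], E_1, …, E_5) with E_t = {{t, t+1}} for each t ∈ {1,…,5}, no strategy profile (p_1, p_2) ∈ [6] × [6] is a Nash equilibrium in Diff(P, 2). -/
open Finset

/-- A temporal graph on vertex set `{1, …, n}` with layers `E 1, …, E tau`. -/
structure TemporalGraph where
  n : ℕ
  tau : ℕ
  htau : 1 ≤ tau
  E : ℕ → Finset (Sym2 ℕ)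

namespace TemporalGraph

/-- The vertex set `[n] = {1, …, n}`. -/
def V (G : TemporalGraph) : Finset ℕ := Finset.Icc 1 G.n

/-- The underlying edge set `⋃_{t=1}^τ E_t`. -/
def underlying (G : TemporalGraph) : Finset (Sym2 ℕ) := (Finset.Icc 1 G.tau).biUnion G.E

/-- The layer used at time `t ≥ 1`: `E t` for `t ≤ τ`, repeating `E τ` afterwards. -/
def layer (G : TemporalGraph) (t : ℕ) : Finset (Sym2 ℕ) := if t ≤ G.tau then G.E t else G.E G.tau

/-- Edges of the path `1 – 2 – ⋯ – n`. -/
def pathEdges (n : ℕ) : Finset (Sym2 ℕ) := (Finset.Icc 1 (n - 1)).image (fun i => s(i, i + 1))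

/-- Edges of the cycle on `[n]`: the path edges together with `{n, 1}`. -/
def cycleEdges (n : ℕ) : Finset (Sym2 ℕ) := insert s(n, 1) (pathEdges n)

/-- A temporal path of size `n`: the underlying graph is the path `1 – 2 – ⋯ – n`. -/
def IsPath (G : TemporalGraph) : Prop := 2 ≤ G.n ∧ G.underlying = pathEdges G.n

/-- A temporal cycle of size `n`: the underlying graph is the cycle on `[n]`. -/
def IsCycle (G : TemporalGraph) : Prop := 3 ≤ G.n ∧ G.underlying = cycleEdges G.n

/-- The underlying simple graph of a temporal graph. -/
def underlyingGraph (G : TemporalGraph) : SimpleGraph ℕ where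
  Adj u v := u ≠ v ∧ s(u, v) ∈ G.underlying
  symm := by
    constructor
    intro u v h
    refine ⟨h.1.symm, ?_⟩
    rw [Sym2.eq_swap]
    exact h.2
  loopless := ⟨fun v h => h.1 rfl⟩

/-- A temporal linear forest: all edges are loopless edges on the vertex set `[n]`,
and every connected component of the underlying graph is a path (equivalently, the
underlying graph is acyclic and every vertex lies on at most two edges). -/
def IsLinearForest (G : TemporalGraph) : Prop :=
  (∀ e ∈ G.underlying, ¬ e.IsDiag ∧ ∀ x ∈ e, x ∈ G.V) ∧
  G.underlyingGraph.IsAcyclic ∧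
  ∀ v : ℕ, (G.underlying.filter (fun e => v ∈ e)).card ≤ 2

/-- Superset temporal graph: the last layer equals the underlying graph. -/
def Superset (G : TemporalGraph) : Prop := G.E G.tau = G.underlying

/-- Monotonically growing: no edge disappears over time. -/
def Growing (G : TemporalGraph) : Prop := ∀ i, 1 ≤ i → i < G.tau → G.E i ⊆ G.E (i + 1)

/-- Monotonically shrinking: no edge appears over time. -/
def Shrinking (G : TemporalGraph) : Prop := ∀ i, 1 ≤ i → i < G.tau → G.E (i + 1) ⊆ G.E i

/-! ### The temporal diffusion game -/

/-- Initial coloring for the diffusion game: `p i` is colored `i`, except that a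
vertex chosen by both players is colored gray (`0`). -/
def diffInit (p1 p2 : ℕ) : ℕ → Option ℕ := fun v =>
  if v = p1 ∧ v = p2 then some 0
  else if v = p1 then some 1
  else if v = p2 then some 2
  else none

open Classical in
/-- One diffusion step on layer `Et`: an uncolored vertex with a neighbor of color
`i ∈ {1,2}` and no neighbor of the other color gets color `i`; an uncolored vertex
with neighbors of both colors becomes gray (`0`); colored vertices keep their color. -/
noncomputable def diffStep (Vset : Finset ℕ) (Et : Finset (Sym2 ℕ)) (c : ℕ → Option ℕ) :
    ℕ → Option ℕ := fun v =>
  match c v with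
  | some i => some i
  | none =>
    if v ∈ Vset ∧ (∃ u, s(u, v) ∈ Et ∧ c u = some 1) ∧ ¬ (∃ u, s(u, v) ∈ Et ∧ c u = some 2) then
      some 1
    else if v ∈ Vset ∧ (∃ u, s(u, v) ∈ Et ∧ c u = some 2) ∧ ¬ (∃ u, s(u, v) ∈ Et ∧ c u = some 1) then
      some 2
    else if v ∈ Vset ∧ (∃ u, s(u, v) ∈ Et ∧ c u = some 1) ∧ (∃ u, s(u, v) ∈ Et ∧ c u = some 2) then
      some 0
    else none

/-- The coloring of the diffusion game after `t` steps (step `t` uses layer `t`,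
where the last layer is repeated after time `τ`). -/
noncomputable def diffColoring (G : TemporalGraph) (p1 p2 : ℕ) : ℕ → ℕ → Option ℕ
  | 0 => diffInit p1 p2
  | t + 1 => diffStep G.V (G.layer (t + 1)) (diffColoring G p1 p2 t)

/-- The final coloring of the diffusion game. Since colored vertices never change
color and each non-stabilized step colors a new vertex, the process has stabilized
after `τ + n` steps, i.e. this is the coloring once it no longer changes. -/
noncomputable def diffFinal (G : TemporalGraph) (p1 p2 : ℕ) : ℕ → Option ℕ :=
  diffColoring G p1 p2 (G.tau + G.n)

open Classical in
/-- Payoff of player `i` in the temporal diffusion game: the number of vertices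
finally colored `i`. -/
noncomputable def diffPayoff (G : TemporalGraph) (p1 p2 i : ℕ) : ℕ :=
  (G.V.filter (fun v => diffFinal G p1 p2 v = some i)).card

/-- Nash equilibrium of the two-player temporal diffusion game `Diff(G, 2)`. -/
def diffNE (G : TemporalGraph) (p1 p2 : ℕ) : Prop :=
  p1 ∈ G.V ∧ p2 ∈ G.V ∧
  (∀ q ∈ G.V, diffPayoff G q p2 1 ≤ diffPayoff G p1 p2 1) ∧
  (∀ q ∈ G.V, diffPayoff G p1 q 2 ≤ diffPayoff G p1 p2 2)

/-! ### Temporal distances and the temporal Voronoi game -/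

/-- `G.reachesBy u t v`: there is a strict temporal walk from `u` to `v` with
arrival time at most `t` (layers after `τ` are the last layer `E τ`). -/
def reachesBy (G : TemporalGraph) (u : ℕ) : ℕ → ℕ → Prop
  | 0 => fun v => v = u
  | t + 1 => fun v =>
      reachesBy G u t v ∨ ∃ w, reachesBy G u t w ∧ s(w, v) ∈ G.layer (t + 1)

/-- `u` reaches `v` (until step `τ`). -/
def reaches (G : TemporalGraph) (u v : ℕ) : Prop := G.reachesBy u G.tau v

/-- The temporal distance `td(u, v)`: the minimum arrival time of a strict
temporal walk from `u` to `v` (`0` for `u = v`, `⊤` if there is no such walk). -/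
noncomputable def td (G : TemporalGraph) (u v : ℕ) : ℕ∞ :=
  sInf {t : ℕ∞ | ∃ k : ℕ, t = (k : ℕ∞) ∧ G.reachesBy u k v}

open Classical in
/-- The coloring in the temporal Voronoi game: `v` gets color `i` if player `i`
arrives strictly first, and is gray (`0`) on finite ties. -/
noncomputable def vorColor (G : TemporalGraph) (p1 p2 v : ℕ) : Option ℕ :=
  if G.td p1 v < G.td p2 v then some 1
  else if G.td p2 v < G.td p1 v then some 2
  else if G.td p1 v ≠ ⊤ then some 0
  else none

open Classical in
/-- Payoff of player `i` in the temporal Voronoi game. -/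
noncomputable def vorPayoff (G : TemporalGraph) (p1 p2 i : ℕ) : ℕ :=
  (G.V.filter (fun v => vorColor G p1 p2 v = some i)).card

/-- Nash equilibrium of the two-player temporal Voronoi game `Vor(G, 2)`. -/
def vorNE (G : TemporalGraph) (p1 p2 : ℕ) : Prop :=
  p1 ∈ G.V ∧ p2 ∈ G.V ∧
  (∀ q ∈ G.V, vorPayoff G q p2 1 ≤ vorPayoff G p1 p2 1) ∧
  (∀ q ∈ G.V, vorPayoff G p1 q 2 ≤ vorPayoff G p1 p2 2)

/-! ### Central vertices and boundaries -/

/-- `m` is a central vertex of the interval `[a, b]`: for odd length `ℓ` it is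
`a + ⌊ℓ/2⌋`; for even length it is one of `a + ℓ/2 - 1` and `a + ℓ/2`. -/
def IsCentral (a b m : ℕ) : Prop :=
  if (b - a + 1) % 2 = 1 then m = a + (b - a + 1) / 2
  else m = a + (b - a + 1) / 2 - 1 ∨ m = a + (b - a + 1) / 2

open Classical in
/-- The number of vertices reachable from `v` until step `τ`. -/
noncomputable def reachCard (G : TemporalGraph) (v : ℕ) : ℕ :=
  (G.V.filter (fun w => G.reaches v w)).card

/-- The maximum number of vertices reachable from any vertex. -/
noncomputable def maxReach (G : TemporalGraph) : ℕ := G.V.sup G.reachCard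

/-- A nice central vertex: it reaches the maximum number of vertices and is a
central vertex of its (interval of) reachable vertices. -/
def IsNiceCentral (G : TemporalGraph) (v : ℕ) : Prop :=
  v ∈ G.V ∧ G.reachCard v = G.maxReach ∧
  ∃ a b : ℕ, (∀ w : ℕ, G.reaches v w ↔ a ≤ w ∧ w ≤ b) ∧ IsCentral a b v

/-- The first layer in which edge `e` appears (`⊤` if it never does). -/
noncomputable def firstAppear (G : TemporalGraph) (e : Sym2 ℕ) : ℕ∞ :=
  sInf {t : ℕ∞ | ∃ k : ℕ, t = (k : ℕ∞) ∧ 1 ≤ k ∧ k ≤ G.tau ∧ e ∈ G.E k}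

/-- `b ≥ v` is a right boundary of `v` if the edge `{b, b+1}` first appears
strictly after time `td(v, b)`. -/
def IsRightBoundary (G : TemporalGraph) (v b : ℕ) : Prop :=
  v ≤ b ∧ b ∈ G.V ∧ G.td v b < G.firstAppear s(b, b + 1)

/-- `b ≤ v` is a left boundary of `v` if the edge `{b-1, b}` first appears
strictly after time `td(v, b)`. -/
def IsLeftBoundary (G : TemporalGraph) (v b : ℕ) : Prop :=
  b ≤ v ∧ b ∈ G.V ∧ G.td v b < G.firstAppear s(b - 1, b)

end TemporalGraph

open TemporalGraph

/-- The temporal path `P = ([6], E_1, …, E_5)` with `E_t = {{t, t+1}}`. -/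
def P0 : TemporalGraph where
  n := 6
  tau := 5
  htau := by norm_num
  E := fun t => {s(t, t + 1)}

/-! ### Auxiliary computable model for the diffusion process on `P0` -/

def cstep (m : ℕ) (c : ℕ → Option ℕ) (v : ℕ) : Option ℕ :=
  match c v with
  | some i => some i
  | none =>
    if 1 ≤ v ∧ v ≤ 6 then
      if ((v = m+1 ∧ c m = some 1) ∨ (v = m ∧ c (m+1) = some 1)) ∧
         ¬ ((v = m+1 ∧ c m = some 2) ∨ (v = m ∧ c (m+1) = some 2)) then some 1
      else if ((v = m+1 ∧ c m = some 2) ∨ (v = m ∧ c (m+1) = some 2)) ∧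
         ¬ ((v = m+1 ∧ c m = some 1) ∨ (v = m ∧ c (m+1) = some 1)) then some 2
      else if ((v = m+1 ∧ c m = some 1) ∨ (v = m ∧ c (m+1) = some 1)) ∧
         ((v = m+1 ∧ c m = some 2) ∨ (v = m ∧ c (m+1) = some 2)) then some 0
      else none
    else none

def cCol (p1 p2 : ℕ) : ℕ → ℕ → Option ℕ
  | 0 => TemporalGraph.diffInit p1 p2
  | t+1 => cstep (min (t+1) 5) (cCol p1 p2 t)

def cPayoff (p1 p2 i : ℕ) : ℕ :=
  ((Finset.Icc 1 6).filter (fun v => cCol p1 p2 11 v = some i)).card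

lemma exists_edge (m v i : ℕ) (c : ℕ → Option ℕ) :
    (∃ u, s(u, v) ∈ ({s(m, m+1)} : Finset (Sym2 ℕ)) ∧ c u = some i) ↔
      ((v = m+1 ∧ c m = some i) ∨ (v = m ∧ c (m+1) = some i)) := by
  constructor
  · rintro ⟨u, hu, hc⟩
    simp only [Finset.mem_singleton, Sym2.eq_iff] at hu
    rcases hu with ⟨h1, h2⟩ | ⟨h1, h2⟩
    · subst h1; subst h2; exact Or.inl ⟨rfl, hc⟩
    · subst h1; subst h2; exact Or.inr ⟨rfl, hc⟩
  · rintro (⟨h, hc⟩ | ⟨h, hc⟩)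
    · subst h
      exact ⟨m, by simp, hc⟩
    · subst h
      exact ⟨v+1, by rw [Finset.mem_singleton, Sym2.eq_swap], hc⟩

lemma stepEq (m : ℕ) (c : ℕ → Option ℕ) :
    TemporalGraph.diffStep P0.V ({s(m, m+1)}) c = cstep m c := by
  funext v
  show TemporalGraph.diffStep P0.V ({s(m, m+1)}) c v = cstep m c v
  unfold TemporalGraph.diffStep cstep
  cases hc : c v with
  | some i => simp only []
  | none =>
    have hV : (v ∈ P0.V) = (1 ≤ v ∧ v ≤ 6) := by
      show (v ∈ Finset.Icc 1 6) = _
      simp [Finset.mem_Icc]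
    simp only [exists_edge, hV]
    by_cases hv : 1 ≤ v ∧ v ≤ 6 <;>
      by_cases hA : ((v = m+1 ∧ c m = some 1) ∨ (v = m ∧ c (m+1) = some 1)) <;>
      by_cases hB : ((v = m+1 ∧ c m = some 2) ∨ (v = m ∧ c (m+1) = some 2)) <;>
      simp [hv, hA, hB]

lemma layerP0 (t : ℕ) : P0.layer (t+1) = {s(min (t+1) 5, min (t+1) 5 + 1)} := by
  rcases le_or_gt (t+1) 5 with h | h
  · simp [TemporalGraph.layer, P0, h, min_eq_left h]
  · simp [TemporalGraph.layer, P0, h.not_ge, min_eq_right h.le]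

lemma colEq (p1 p2 t : ℕ) : P0.diffColoring p1 p2 t = cCol p1 p2 t := by
  induction t with
  | zero => rfl
  | succ t ih =>
    show TemporalGraph.diffStep P0.V (P0.layer (t+1)) (P0.diffColoring p1 p2 t) = _
    rw [layerP0, ih, stepEq]
    rfl

lemma payoff_eq (p1 p2 i : ℕ) : P0.diffPayoff p1 p2 i = cPayoff p1 p2 i := by
  unfold TemporalGraph.diffPayoff TemporalGraph.diffFinal cPayoff
  rw [show P0.tau + P0.n = 11 from rfl, colEq]
  rw [show P0.V = Finset.Icc 1 6 from rfl]

/-- There is a temporal path (namely `P0`) such that no strategy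
profile `(p1, p2) ∈ [6] × [6]` is a Nash equilibrium in `Diff(P0, 2)`. -/
theorem stmt0 :
    P0.IsPath ∧ ∀ p1 ∈ P0.V, ∀ p2 ∈ P0.V, ¬ P0.diffNE p1 p2 := by
  constructor
  · constructor
    · show 2 ≤ P0.n
      norm_num [P0]
    · decide
  intro p1 hp1 p2 hp2 h
  obtain ⟨-, -, h1, h2⟩ := h
  simp only [payoff_eq] at h1 h2
  have hp1' : p1 ∈ Finset.Icc 1 6 := hp1
  have hp2' : p2 ∈ Finset.Icc 1 6 := hp2
  clear hp1 hp2
  fin_cases hp1' <;> fin_cases hp2'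
  · exact absurd (h1 2 (by decide)) (by decide)
  · exact absurd (h1 3 (by decide)) (by decide)
  · exact absurd (h1 4 (by decide)) (by decide)
  · exact absurd (h2 2 (by decide)) (by decide)
  · exact absurd (h2 2 (by decide)) (by decide)
  · exact absurd (h2 2 (by decide)) (by decide)
  · exact absurd (h2 3 (by decide)) (by decide)
  · exact absurd (h1 1 (by decide)) (by decide)
  · exact absurd (h1 4 (by decide)) (by decide)
  · exact absurd (h2 3 (by decide)) (by decide)
  · exact absurd (h2 3 (by decide)) (by decide)
  · exact absurd (h2 3 (by decide)) (by decide)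
  · exact absurd (h1 2 (by decide)) (by decide)
  · exact absurd (h2 4 (by decide)) (by decide)
  · exact absurd (h1 1 (by decide)) (by decide)
  · exact absurd (h1 1 (by decide)) (by decide)
  · exact absurd (h1 1 (by decide)) (by decide)
  · exact absurd (h1 1 (by decide)) (by decide)
  · exact absurd (h1 2 (by decide)) (by decide)
  · exact absurd (h1 3 (by decide)) (by decide)
  · exact absurd (h2 1 (by decide)) (by decide)
  · exact absurd (h1 1 (by decide)) (by decide)
  · exact absurd (h1 1 (by decide)) (by decide)
  · exact absurd (h1 1 (by decide)) (by decide)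
  · exact absurd (h1 2 (by decide)) (by decide)
  · exact absurd (h1 3 (by decide)) (by decide)
  · exact absurd (h1 4 (by decide)) (by decide)
  · exact absurd (h1 1 (by decide)) (by decide)
  · exact absurd (h1 1 (by decide)) (by decide)
  · exact absurd (h1 1 (by decide)) (by decide)
  · exact absurd (h1 2 (by decide)) (by decide)
  · exact absurd (h1 3 (by decide)) (by decide)
  · exact absurd (h1 1 (by decide)) (by decide)
  · exact absurd (h1 1 (by decide)) (by decide)
  · exact absurd (h1 1 (by decide)) (by decide)
  · exact absurd (h1 1 (by decide)) (by decide)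
end

section
/- Let P be a superset temporal path of size n and let p_1 < p_2 be vertices in [n]. The strategy profile (p_1, p_2) is a Nash equilibrium in the two-player temporal diffusion game Diff(P, 2) if and only if p_1 ∈ {⌊n/2⌋, ⌈n/2⌉} and p_2 = p_1 + 1. -/
open Finset

open TemporalGraph
section Aux
open TemporalGraph
variable {G : TemporalGraph}

lemma aux_mem_pathEdges {n u v : ℕ} :
    s(u, v) ∈ pathEdges n ↔ (1 ≤ u ∧ v = u + 1 ∧ v ≤ n) ∨ (1 ≤ v ∧ u = v + 1 ∧ u ≤ n) := by
  simp only [pathEdges, Finset.mem_image, Finset.mem_Icc, Sym2.eq_iff]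
  constructor
  · rintro ⟨i, ⟨hi1, hi2⟩, h | h⟩ <;> omega
  · rintro (⟨h1, h2, h3⟩ | ⟨h1, h2, h3⟩)
    · exact ⟨u, by omega, by omega⟩
    · exact ⟨v, by omega, by omega⟩

lemma aux_layer_subset (hP : G.IsPath) : ∀ t, 1 ≤ t → G.layer t ⊆ pathEdges G.n := by
  intro t ht
  rw [← hP.2]
  unfold TemporalGraph.layer TemporalGraph.underlying
  split_ifs with h
  · exact fun e he => Finset.mem_biUnion.2 ⟨t, Finset.mem_Icc.2 ⟨ht, h⟩, he⟩
  · exact fun e he => Finset.mem_biUnion.2 ⟨G.tau, Finset.mem_Icc.2 ⟨G.htau, le_rfl⟩, he⟩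

lemma aux_layer_full (hP : G.IsPath) (hS : G.Superset) :
    ∀ t, G.tau ≤ t → G.layer t = pathEdges G.n := by
  intro t ht
  unfold TemporalGraph.layer
  split_ifs with h
  · have : t = G.tau := le_antisymm h ht
    rw [this, hS, hP.2]
  · rw [hS, hP.2]

lemma aux_step_persist {Vs : Finset ℕ} {Et : Finset (Sym2 ℕ)} {c : ℕ → Option ℕ} {v : ℕ} {j : ℕ}
    (h : c v = some j) : diffStep Vs Et c v = some j := by
  unfold diffStep
  rw [h]

lemma aux_coloring_succ (p1 p2 t : ℕ) :
    diffColoring G p1 p2 (t + 1) = diffStep G.V (G.layer (t + 1)) (diffColoring G p1 p2 t) := rfl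

lemma aux_persist {p1 p2 t t' v j : ℕ} (h : t ≤ t')
    (hc : diffColoring G p1 p2 t v = some j) : diffColoring G p1 p2 t' v = some j := by
  induction t' with
  | zero => exact (Nat.le_zero.1 h ▸ hc)
  | succ t' ih =>
    rcases Nat.lt_or_ge t (t' + 1) with h' | h'
    · have := ih (Nat.lt_succ_iff.1 h')
      rw [aux_coloring_succ]
      exact aux_step_persist this
    · exact (le_antisymm h h') ▸ hc

lemma aux_persist0 {p1 p2 t v j : ℕ} (hc : diffInit p1 p2 v = some j) :
    diffColoring G p1 p2 t v = some j :=
  aux_persist (Nat.zero_le t) hc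

lemma aux_init_ne_none_1 {p1 p2 : ℕ} : diffInit p1 p2 p1 ≠ none := by
  unfold diffInit; split_ifs <;> simp_all

lemma aux_init_ne_none_2 {p1 p2 : ℕ} : diffInit p1 p2 p2 ≠ none := by
  unfold diffInit
  split_ifs with h1 h2 h3 <;> simp_all

lemma aux_colored_ne_none {p1 p2 t v : ℕ} (h : diffInit p1 p2 v ≠ none) :
    diffColoring G p1 p2 t v ≠ none := by
  rcases hj : diffInit p1 p2 v with _ | j
  · exact absurd hj h
  · rw [aux_persist0 hj]; simp

lemma aux_values (p1 p2 : ℕ) : ∀ t v, diffColoring G p1 p2 t v = none ∨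
    diffColoring G p1 p2 t v = some 0 ∨ diffColoring G p1 p2 t v = some 1 ∨
    diffColoring G p1 p2 t v = some 2 := by
  intro t
  induction t with
  | zero =>
    intro v
    simp only [diffColoring, diffInit]
    split_ifs <;> simp
  | succ t ih =>
    intro v
    rw [aux_coloring_succ]
    rcases ih v with h | h | h | h <;> try (rw [aux_step_persist h]; simp)
    · unfold diffStep
      rw [h]
      split_ifs <;> simp

lemma aux_confine_lt (hP : G.IsPath) {p1 p2 i b : ℕ} (hi : i = 1 ∨ i = 2)
    (hinit : ∀ v, diffInit p1 p2 v = some i → v < b)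
    (hb : diffInit p1 p2 b ≠ none) :
    ∀ t v, diffColoring G p1 p2 t v = some i → v < b := by
  intro t
  induction t with
  | zero => exact hinit
  | succ t ih =>
    intro v hv
    rw [aux_coloring_succ] at hv
    rcases h : diffColoring G p1 p2 t v with _ | j
    · unfold diffStep at hv
      rw [h] at hv
      have hvb : v ≠ b := by
        intro hvb
        exact aux_colored_ne_none (G := G) (t := t) hb (hvb ▸ h)
      split_ifs at hv with h1 h2 h3
      · -- got color 1
        obtain ⟨-, ⟨u, he, hu⟩, -⟩ := h1
        have hi1 : i = 1 := by injection hv with hv'; omega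
        have hub : u < b := ih u (hi1 ▸ hu)
        have := aux_mem_pathEdges.1 (aux_layer_subset hP (t+1) (Nat.le_add_left 1 t) he)
        omega
      · obtain ⟨-, ⟨u, he, hu⟩, -⟩ := h2
        have hi2 : i = 2 := by injection hv with hv'; omega
        have hub : u < b := ih u (hi2 ▸ hu)
        have := aux_mem_pathEdges.1 (aux_layer_subset hP (t+1) (Nat.le_add_left 1 t) he)
        omega
      · injection hv with hv'; omega

    · rw [aux_step_persist h] at hv
      exact ih v (h.trans hv)

lemma aux_confine_gt (hP : G.IsPath) {p1 p2 i b : ℕ} (hi : i = 1 ∨ i = 2)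
    (hinit : ∀ v, diffInit p1 p2 v = some i → b < v)
    (hb : diffInit p1 p2 b ≠ none) :
    ∀ t v, diffColoring G p1 p2 t v = some i → b < v := by
  intro t
  induction t with
  | zero => exact hinit
  | succ t ih =>
    intro v hv
    rw [aux_coloring_succ] at hv
    rcases h : diffColoring G p1 p2 t v with _ | j
    · unfold diffStep at hv
      rw [h] at hv
      have hvb : v ≠ b := by
        intro hvb
        exact aux_colored_ne_none (G := G) (t := t) hb (hvb ▸ h)
      split_ifs at hv with h1 h2 h3
      · obtain ⟨-, ⟨u, he, hu⟩, -⟩ := h1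
        have hi1 : i = 1 := by injection hv with hv'; omega
        have hub : b < u := ih u (hi1 ▸ hu)
        have := aux_mem_pathEdges.1 (aux_layer_subset hP (t+1) (Nat.le_add_left 1 t) he)
        omega
      · obtain ⟨-, ⟨u, he, hu⟩, -⟩ := h2
        have hi2 : i = 2 := by injection hv with hv'; omega
        have hub : b < u := ih u (hi2 ▸ hu)
        have := aux_mem_pathEdges.1 (aux_layer_subset hP (t+1) (Nat.le_add_left 1 t) he)
        omega
      · injection hv with hv'; omega

    · rw [aux_step_persist h] at hv
      exact ih v (h.trans hv)

lemma aux_no_gray (hP : G.IsPath) {p1 p2 a : ℕ} (hne : p1 ≠ p2)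
    (hc1 : ∀ t v, diffColoring G p1 p2 t v = some 1 → v ≤ a)
    (hc2 : ∀ t v, diffColoring G p1 p2 t v = some 2 → a + 1 ≤ v)
    (hA : diffInit p1 p2 a ≠ none) (hB : diffInit p1 p2 (a + 1) ≠ none) :
    ∀ t v, diffColoring G p1 p2 t v ≠ some 0 := by
  intro t
  induction t with
  | zero =>
    intro v hv
    unfold diffColoring diffInit at hv
    split_ifs at hv with hq h1 h2
    · exact hne (by omega)
    · simp at hv
    · simp at hv
  | succ t ih =>
    intro v hv
    rw [aux_coloring_succ] at hv
    rcases h : diffColoring G p1 p2 t v with _ | j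
    · unfold diffStep at hv
      rw [h] at hv
      split_ifs at hv with h1 h2 h3
      · simp at hv
      · simp at hv
      · obtain ⟨-, ⟨u1, he1, hu1⟩, ⟨u2, he2, hu2⟩⟩ := h3
        have hb1 := hc1 t u1 hu1
        have hb2 := hc2 t u2 hu2
        have e1 := aux_mem_pathEdges.1 (aux_layer_subset hP (t+1) (Nat.le_add_left 1 t) he1)
        have e2 := aux_mem_pathEdges.1 (aux_layer_subset hP (t+1) (Nat.le_add_left 1 t) he2)
        have hva : v = a ∨ v = a + 1 := by omega
        rcases hva with hva | hva
        · exact aux_colored_ne_none (G := G) (t := t) hA (hva ▸ h)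
        · exact aux_colored_ne_none (G := G) (t := t) hB (hva ▸ h)
    · rw [aux_step_persist h] at hv
      exact ih v (h.trans hv)

lemma aux_same (p i : ℕ) (hi : i = 1 ∨ i = 2) :
    ∀ t v, diffColoring G p p t v ≠ some i := by
  intro t
  induction t with
  | zero =>
    intro v hv
    unfold diffColoring diffInit at hv
    split_ifs at hv <;> first | (injection hv with hv'; omega) | tauto
  | succ t ih =>
    intro v hv
    rw [aux_coloring_succ] at hv
    rcases h : diffColoring G p p t v with _ | j
    · unfold diffStep at hv
      rw [h] at hv
      split_ifs at hv with h1 h2 h3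
      · obtain ⟨-, ⟨u, he, hu⟩, -⟩ := h1
        have hi1 : i = 1 := by injection hv with hv'; omega
        exact ih u (hi1 ▸ hu)
      · obtain ⟨-, ⟨u, he, hu⟩, -⟩ := h2
        have hi2 : i = 2 := by injection hv with hv'; omega
        exact ih u (hi2 ▸ hu)
      · injection hv with hv'; omega
    · rw [aux_step_persist h] at hv
      exact ih v (h.trans hv)

lemma aux_spread_left (hP : G.IsPath) (hS : G.Superset) {p1 p2 a : ℕ}
    (hstart : diffInit p1 p2 a = some 1)
    (hconf2 : ∀ t v, diffColoring G p1 p2 t v = some 2 → a < v)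
    (hgray : ∀ t v, diffColoring G p1 p2 t v ≠ some 0)
    (ha : 1 ≤ a) (han : a ≤ G.n) :
    ∀ k v, 1 ≤ v → v ≤ a → a ≤ v + k → diffColoring G p1 p2 (G.tau + k) v = some 1 := by
  intro k
  induction k with
  | zero =>
    intro v h1 h2 h3
    have : v = a := by omega
    exact this ▸ aux_persist0 hstart
  | succ k ih =>
    intro v h1 h2 h3
    rcases Nat.lt_or_ge (v + k) a with h4 | h4
    · -- v + k + 1 = a, so v < a and v+1 ≤ a
      have hva : v + k + 1 = a := by omega
      have hnext : diffColoring G p1 p2 (G.tau + k) (v + 1) = some 1 :=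
        ih (v + 1) (by omega) (by omega) (by omega)
      have hstep : G.tau + (k + 1) = (G.tau + k) + 1 := by omega
      rw [hstep, aux_coloring_succ]
      have hfull : G.layer (G.tau + k + 1) = pathEdges G.n :=
        aux_layer_full hP hS _ (by omega)
      rcases h : diffColoring G p1 p2 (G.tau + k) v with _ | j
      · unfold diffStep
        rw [h]
        have hnbr : ∀ u, s(u, v) ∈ G.layer (G.tau + k + 1) → u ≤ a := by
          intro u he
          rw [hfull] at he
          have := aux_mem_pathEdges.1 he
          omega
        have hcond : v ∈ G.V ∧ (∃ u, s(u, v) ∈ G.layer (G.tau + k + 1) ∧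
            diffColoring G p1 p2 (G.tau + k) u = some 1) ∧
            ¬ (∃ u, s(u, v) ∈ G.layer (G.tau + k + 1) ∧
            diffColoring G p1 p2 (G.tau + k) u = some 2) := by
          refine ⟨Finset.mem_Icc.2 ⟨h1, by omega⟩, ⟨v + 1, ?_, hnext⟩, ?_⟩
          · rw [hfull]
            exact aux_mem_pathEdges.2 (Or.inr ⟨h1, rfl, by omega⟩)
          · rintro ⟨u, he, hu⟩
            exact absurd (hconf2 _ u hu) (by have := hnbr u he; omega)
        rw [if_pos hcond]
      · have hj : j = 1 := by
          rcases aux_values (G := G) p1 p2 (G.tau + k) v with hv | hv | hv | hv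
          · rw [hv] at h; simp at h
          · exact absurd hv (hgray _ _)
          · rw [hv] at h; injection h with h'; omega
          · exact absurd (hconf2 _ v hv) (by omega)
        rw [hj] at h
        exact aux_step_persist h
    · exact aux_persist (by omega) (ih v h1 h2 (by omega))

lemma aux_spread_right (hP : G.IsPath) (hS : G.Superset) {p1 p2 b : ℕ}
    (hstart : diffInit p1 p2 b = some 2)
    (hconf1 : ∀ t v, diffColoring G p1 p2 t v = some 1 → v < b)
    (hgray : ∀ t v, diffColoring G p1 p2 t v ≠ some 0)
    (hb : 1 ≤ b) (hbn : b ≤ G.n) :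
    ∀ k v, b ≤ v → v ≤ G.n → v ≤ b + k → diffColoring G p1 p2 (G.tau + k) v = some 2 := by
  intro k
  induction k with
  | zero =>
    intro v h1 h2 h3
    have : v = b := by omega
    exact this ▸ aux_persist0 hstart
  | succ k ih =>
    intro v h1 h2 h3
    rcases Nat.lt_or_ge (b + k) v with h4 | h4
    · have hvb : v = b + k + 1 := by omega
      have hnext : diffColoring G p1 p2 (G.tau + k) (v - 1) = some 2 :=
        ih (v - 1) (by omega) (by omega) (by omega)
      have hstep : G.tau + (k + 1) = (G.tau + k) + 1 := by omega
      rw [hstep, aux_coloring_succ]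
      have hfull : G.layer (G.tau + k + 1) = pathEdges G.n :=
        aux_layer_full hP hS _ (by omega)
      rcases h : diffColoring G p1 p2 (G.tau + k) v with _ | j
      · unfold diffStep
        rw [h]
        have hnbr : ∀ u, s(u, v) ∈ G.layer (G.tau + k + 1) → b ≤ u := by
          intro u he
          rw [hfull] at he
          have := aux_mem_pathEdges.1 he
          omega
        have hno1 : ¬ (∃ u, s(u, v) ∈ G.layer (G.tau + k + 1) ∧
            diffColoring G p1 p2 (G.tau + k) u = some 1) := by
          rintro ⟨u, he, hu⟩
          exact absurd (hconf1 _ u hu) (by have := hnbr u he; omega)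
        have hcond : v ∈ G.V ∧ (∃ u, s(u, v) ∈ G.layer (G.tau + k + 1) ∧
            diffColoring G p1 p2 (G.tau + k) u = some 2) ∧
            ¬ (∃ u, s(u, v) ∈ G.layer (G.tau + k + 1) ∧
            diffColoring G p1 p2 (G.tau + k) u = some 1) := by
          refine ⟨Finset.mem_Icc.2 ⟨by omega, h2⟩, ⟨v - 1, ?_, hnext⟩, hno1⟩
          rw [hfull]
          exact aux_mem_pathEdges.2 (Or.inl ⟨by omega, by omega, h2⟩)
        rw [if_neg, if_pos hcond]
        rintro ⟨-, hex, -⟩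
        exact hno1 hex
      · have hj : j = 2 := by
          rcases aux_values (G := G) p1 p2 (G.tau + k) v with hv | hv | hv | hv
          · rw [hv] at h; simp at h
          · exact absurd hv (hgray _ _)
          · exact absurd (hconf1 _ v hv) (by omega)
          · rw [hv] at h; injection h with h'; omega
        rw [hj] at h
        exact aux_step_persist h
    · exact aux_persist (by omega) (ih v h1 h2 (by omega))

lemma aux_init1 {p1 p2 : ℕ} (hne : p1 ≠ p2) : diffInit p1 p2 p1 = some 1 := by
  unfold diffInit; split_ifs <;> simp_all

lemma aux_init2 {p1 p2 : ℕ} (hne : p1 ≠ p2) : diffInit p1 p2 p2 = some 2 := by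
  unfold diffInit; split_ifs <;> simp_all

lemma aux_init1' {p1 p2 : ℕ} : ∀ v, diffInit p1 p2 v = some 1 → v = p1 := by
  intro v hv; unfold diffInit at hv; split_ifs at hv <;> simp_all

lemma aux_init2' {p1 p2 : ℕ} : ∀ v, diffInit p1 p2 v = some 2 → v = p2 := by
  intro v hv; unfold diffInit at hv; split_ifs at hv <;> simp_all

lemma aux_adj (hP : G.IsPath) (hS : G.Superset) {a : ℕ} (ha : 1 ≤ a) (han : a + 1 ≤ G.n) :
    diffPayoff G a (a + 1) 1 = a ∧ diffPayoff G a (a + 1) 2 = G.n - a := by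
  have hne : a ≠ a + 1 := by omega
  have hconf1 : ∀ t v, diffColoring G a (a+1) t v = some 1 → v < a + 1 :=
    aux_confine_lt hP (Or.inl rfl) (fun v hv => by have := aux_init1' v hv; omega)
      (by rw [aux_init2 hne]; simp)
  have hconf2 : ∀ t v, diffColoring G a (a+1) t v = some 2 → a < v :=
    aux_confine_gt hP (Or.inr rfl) (fun v hv => by have := aux_init2' v hv; omega)
      (by rw [aux_init1 hne]; simp)
  have hgray : ∀ t v, diffColoring G a (a+1) t v ≠ some 0 :=
    aux_no_gray hP hne (fun t v hv => by have := hconf1 t v hv; omega)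
      (fun t v hv => hconf2 t v hv) (by rw [aux_init1 hne]; simp)
      (by rw [aux_init2 hne]; simp)
  have hsl := aux_spread_left hP hS (aux_init1 hne) hconf2 hgray ha (by omega)
  have hsr := aux_spread_right hP hS (aux_init2 hne) hconf1 hgray (by omega) han
  constructor
  · show (G.V.filter (fun v => diffColoring G a (a+1) (G.tau + G.n) v = some 1)).card = a
    have hset : G.V.filter (fun v => diffColoring G a (a+1) (G.tau + G.n) v = some 1)
        = Finset.Icc 1 a := by
      ext v
      simp only [Finset.mem_filter, TemporalGraph.V, Finset.mem_Icc]
      constructor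
      · rintro ⟨⟨hv1, hv2⟩, hv3⟩
        exact ⟨hv1, by have := hconf1 _ _ hv3; omega⟩
      · rintro ⟨hv1, hv2⟩
        exact ⟨⟨hv1, by omega⟩, hsl G.n v hv1 hv2 (by omega)⟩
    rw [hset, Nat.card_Icc]
    omega
  · show (G.V.filter (fun v => diffColoring G a (a+1) (G.tau + G.n) v = some 2)).card = G.n - a
    have hset : G.V.filter (fun v => diffColoring G a (a+1) (G.tau + G.n) v = some 2)
        = Finset.Icc (a+1) G.n := by
      ext v
      simp only [Finset.mem_filter, TemporalGraph.V, Finset.mem_Icc]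
      constructor
      · rintro ⟨⟨hv1, hv2⟩, hv3⟩
        exact ⟨by have := hconf2 _ _ hv3; omega, hv2⟩
      · rintro ⟨hv1, hv2⟩
        exact ⟨⟨by omega, hv2⟩, hsr G.n v hv1 hv2 (by omega)⟩
    rw [hset, Nat.card_Icc]
    omega

def csw : Option ℕ → Option ℕ
  | some 1 => some 2
  | some 2 => some 1
  | o => o

lemma csw_eq_one {o : Option ℕ} : csw o = some 1 ↔ o = some 2 := by
  rcases o with _ | j
  · simp [csw]
  · match j with
    | 0 => simp [csw]
    | 1 => simp [csw]
    | 2 => simp [csw]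
    | (m+3) => simp [csw]

lemma csw_eq_two {o : Option ℕ} : csw o = some 2 ↔ o = some 1 := by
  rcases o with _ | j
  · simp [csw]
  · match j with
    | 0 => simp [csw]
    | 1 => simp [csw]
    | 2 => simp [csw]
    | (m+3) => simp [csw]

lemma csw_some {j : ℕ} : ∃ j', csw (some j) = some j' := by
  match j with
  | 0 => exact ⟨0, rfl⟩
  | 1 => exact ⟨2, rfl⟩
  | 2 => exact ⟨1, rfl⟩
  | (m+3) => exact ⟨m+3, rfl⟩

lemma aux_swap (p1 p2 : ℕ) : ∀ t v,
    diffColoring G p2 p1 t v = csw (diffColoring G p1 p2 t v) := by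
  intro t
  induction t with
  | zero =>
    intro v
    show diffInit p2 p1 v = csw (diffInit p1 p2 v)
    unfold diffInit
    by_cases h3 : p1 = p2
    · subst h3
      by_cases h1 : v = p1 <;> simp [h1, csw]
    · by_cases h1 : v = p1 <;> by_cases h2 : v = p2 <;>
        first
        | (exfalso; omega)
        | simp [h1, h2, h3, Ne.symm h3, csw]
  | succ t ih =>
    intro v
    rw [aux_coloring_succ, aux_coloring_succ]
    unfold diffStep
    rcases h : diffColoring G p1 p2 t v with _ | j
    · rw [ih v, h]
      show _ = csw (match (none : Option ℕ) with
        | some i => some i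
        | none => _)
      have hE1 : (∃ u, s(u, v) ∈ G.layer (t+1) ∧ diffColoring G p2 p1 t u = some 1) ↔
          (∃ u, s(u, v) ∈ G.layer (t+1) ∧ diffColoring G p1 p2 t u = some 2) := by
        constructor <;> rintro ⟨u, he, hu⟩ <;> refine ⟨u, he, ?_⟩
        · rw [ih u] at hu; exact csw_eq_one.1 hu
        · rw [ih u]; exact csw_eq_one.2 hu
      have hE2 : (∃ u, s(u, v) ∈ G.layer (t+1) ∧ diffColoring G p2 p1 t u = some 2) ↔
          (∃ u, s(u, v) ∈ G.layer (t+1) ∧ diffColoring G p1 p2 t u = some 1) := by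
        constructor <;> rintro ⟨u, he, hu⟩ <;> refine ⟨u, he, ?_⟩
        · rw [ih u] at hu; exact csw_eq_two.1 hu
        · rw [ih u]; exact csw_eq_two.2 hu
      by_cases hA : v ∈ G.V <;>
        by_cases h1 : (∃ u, s(u, v) ∈ G.layer (t+1) ∧ diffColoring G p1 p2 t u = some 1) <;>
        by_cases h2 : (∃ u, s(u, v) ∈ G.layer (t+1) ∧ diffColoring G p1 p2 t u = some 2) <;>
        simp [hA, h1, h2, hE1, hE2, csw]
    · rw [ih v, h]
      obtain ⟨j', hj'⟩ := csw_some (j := j)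
      rw [hj']

lemma aux_payoff_swap1 (p1 p2 : ℕ) : diffPayoff G p2 p1 1 = diffPayoff G p1 p2 2 := by
  unfold TemporalGraph.diffPayoff TemporalGraph.diffFinal
  congr 1
  apply Finset.filter_congr
  intro v _
  rw [aux_swap p1 p2, csw_eq_one]

lemma aux_payoff_swap2 (p1 p2 : ℕ) : diffPayoff G p2 p1 2 = diffPayoff G p1 p2 1 := by
  unfold TemporalGraph.diffPayoff TemporalGraph.diffFinal
  congr 1
  apply Finset.filter_congr
  intro v _
  rw [aux_swap p1 p2, csw_eq_two]

lemma aux_adj' (hP : G.IsPath) (hS : G.Superset) {a : ℕ} (ha : 1 ≤ a) (han : a + 1 ≤ G.n) :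
    diffPayoff G (a + 1) a 1 = G.n - a ∧ diffPayoff G (a + 1) a 2 = a := by
  constructor
  · rw [aux_payoff_swap1]; exact (aux_adj hP hS ha han).2
  · rw [aux_payoff_swap2]; exact (aux_adj hP hS ha han).1

lemma aux_payoff_same (p i : ℕ) (hi : i = 1 ∨ i = 2) : diffPayoff G p p i = 0 := by
  unfold TemporalGraph.diffPayoff
  rw [Finset.card_eq_zero, Finset.filter_eq_empty_iff]
  intro v _
  exact aux_same p i hi _ v

lemma aux_sub1_lt (hP : G.IsPath) {q p2 : ℕ} (h : q < p2) :
    G.V.filter (fun v => diffFinal G q p2 v = some 1) ⊆ Finset.Icc 1 (p2 - 1) := by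
  have hne : q ≠ p2 := by omega
  have hconf : ∀ t v, diffColoring G q p2 t v = some 1 → v < p2 :=
    aux_confine_lt hP (Or.inl rfl) (fun v hv => by have := aux_init1' v hv; omega)
      (by rw [aux_init2 hne]; simp)
  intro v hv
  rw [Finset.mem_filter, TemporalGraph.V, Finset.mem_Icc] at hv
  rw [Finset.mem_Icc]
  have := hconf _ _ hv.2
  omega

lemma aux_sub1_gt (hP : G.IsPath) {q p2 : ℕ} (h : p2 < q) :
    G.V.filter (fun v => diffFinal G q p2 v = some 1) ⊆ Finset.Icc (p2 + 1) G.n := by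
  have hne : q ≠ p2 := by omega
  have hconf : ∀ t v, diffColoring G q p2 t v = some 1 → p2 < v :=
    aux_confine_gt hP (Or.inl rfl) (fun v hv => by have := aux_init1' v hv; omega)
      (by rw [aux_init2 hne]; simp)
  intro v hv
  rw [Finset.mem_filter, TemporalGraph.V, Finset.mem_Icc] at hv
  rw [Finset.mem_Icc]
  have := hconf _ _ hv.2
  omega

lemma aux_sub2_gt (hP : G.IsPath) {p1 q : ℕ} (h : p1 < q) :
    G.V.filter (fun v => diffFinal G p1 q v = some 2) ⊆ Finset.Icc (p1 + 1) G.n := by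
  have hne : p1 ≠ q := by omega
  have hconf : ∀ t v, diffColoring G p1 q t v = some 2 → p1 < v :=
    aux_confine_gt hP (Or.inr rfl) (fun v hv => by have := aux_init2' v hv; omega)
      (by rw [aux_init1 hne]; simp)
  intro v hv
  rw [Finset.mem_filter, TemporalGraph.V, Finset.mem_Icc] at hv
  rw [Finset.mem_Icc]
  have := hconf _ _ hv.2
  omega

lemma aux_sub2_lt (hP : G.IsPath) {p1 q : ℕ} (h : q < p1) :
    G.V.filter (fun v => diffFinal G p1 q v = some 2) ⊆ Finset.Icc 1 (p1 - 1) := by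
  have hne : p1 ≠ q := by omega
  have hconf : ∀ t v, diffColoring G p1 q t v = some 2 → v < p1 :=
    aux_confine_lt hP (Or.inr rfl) (fun v hv => by have := aux_init2' v hv; omega)
      (by rw [aux_init1 hne]; simp)
  intro v hv
  rw [Finset.mem_filter, TemporalGraph.V, Finset.mem_Icc] at hv
  rw [Finset.mem_Icc]
  have := hconf _ _ hv.2
  omega

end Aux


/-- On a superset temporal path of size `n`, a strategy profile
`(p1, p2)` with `p1 < p2` is a Nash equilibrium in `Diff(P, 2)` iff
`p1 ∈ {⌊n/2⌋, ⌈n/2⌉}` and `p2 = p1 + 1`. -/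
theorem stmt1 (G : TemporalGraph) (hP : G.IsPath) (hS : G.Superset)
    (p1 p2 : ℕ) (h1 : p1 ∈ G.V) (h2 : p2 ∈ G.V) (hlt : p1 < p2) :
    G.diffNE p1 p2 ↔ ((p1 = G.n / 2 ∨ p1 = (G.n + 1) / 2) ∧ p2 = p1 + 1) := by
  have hn2 : 2 ≤ G.n := hP.1
  rw [TemporalGraph.V, Finset.mem_Icc] at h1 h2
  constructor
  · rintro ⟨-, -, hN1, hN2⟩
    have hstep1 : p2 = p1 + 1 := by
      by_contra hne'
      have hgap : p1 + 2 ≤ p2 := by omega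
      -- player 1 deviates to p2 - 1
      have hA := hN1 (p2 - 1) (Finset.mem_Icc.2 ⟨by omega, by omega⟩)
      have hadj1 : G.diffPayoff (p2 - 1) p2 1 = p2 - 1 := by
        have := (aux_adj (G := G) hP hS (a := p2 - 1) (by omega) (by omega)).1
        rwa [show p2 - 1 + 1 = p2 by omega] at this
      rw [hadj1] at hA
      have hsub1 := aux_sub1_lt (G := G) hP hlt
      have hcard1 : (Finset.Icc 1 (p2 - 1)).card ≤
          (G.V.filter (fun v => diffFinal G p1 p2 v = some 1)).card := by
        rw [Nat.card_Icc]
        calc p2 - 1 + 1 - 1 = p2 - 1 := by omega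
        _ ≤ _ := hA
      have heq1 := Finset.eq_of_subset_of_card_le hsub1 hcard1
      have hm1 : diffFinal G p1 p2 (p1 + 1) = some 1 := by
        have : (p1 + 1) ∈ G.V.filter (fun v => diffFinal G p1 p2 v = some 1) := by
          rw [heq1]; exact Finset.mem_Icc.2 ⟨by omega, by omega⟩
        exact (Finset.mem_filter.1 this).2
      -- player 2 deviates to p1 + 1
      have hB := hN2 (p1 + 1) (Finset.mem_Icc.2 ⟨by omega, by omega⟩)
      have hadj2 : G.diffPayoff p1 (p1 + 1) 2 = G.n - p1 :=
        (aux_adj (G := G) hP hS (a := p1) (by omega) (by omega)).2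
      rw [hadj2] at hB
      have hsub2 := aux_sub2_gt (G := G) hP hlt
      have hcard2 : (Finset.Icc (p1 + 1) G.n).card ≤
          (G.V.filter (fun v => diffFinal G p1 p2 v = some 2)).card := by
        rw [Nat.card_Icc]
        calc G.n + 1 - (p1 + 1) = G.n - p1 := by omega
        _ ≤ _ := hB
      have heq2 := Finset.eq_of_subset_of_card_le hsub2 hcard2
      have hm2 : diffFinal G p1 p2 (p1 + 1) = some 2 := by
        have : (p1 + 1) ∈ G.V.filter (fun v => diffFinal G p1 p2 v = some 2) := by
          rw [heq2]; exact Finset.mem_Icc.2 ⟨by omega, by omega⟩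
        exact (Finset.mem_filter.1 this).2
      rw [hm1] at hm2
      simp at hm2
    subst hstep1
    refine ⟨?_, rfl⟩
    by_contra hc
    push_neg at hc
    have hcase : p1 + 1 ≤ G.n / 2 ∨ (G.n + 1) / 2 + 1 ≤ p1 := by omega
    rcases hcase with hcase | hcase
    · -- player 1 deviates to p1 + 2
      have hA := hN1 (p1 + 2) (Finset.mem_Icc.2 ⟨by omega, by omega⟩)
      have hdev : G.diffPayoff (p1 + 2) (p1 + 1) 1 = G.n - (p1 + 1) :=
        (aux_adj' (G := G) hP hS (a := p1 + 1) (by omega) (by omega)).1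
      have hbase : G.diffPayoff p1 (p1 + 1) 1 = p1 :=
        (aux_adj (G := G) hP hS (a := p1) (by omega) (by omega)).1
      rw [hdev, hbase] at hA
      omega
    · -- player 2 deviates to p1 - 1
      have hB := hN2 (p1 - 1) (Finset.mem_Icc.2 ⟨by omega, by omega⟩)
      have hdev : G.diffPayoff p1 (p1 - 1) 2 = p1 - 1 := by
        have := (aux_adj' (G := G) hP hS (a := p1 - 1) (by omega) (by omega)).2
        rwa [show p1 - 1 + 1 = p1 by omega] at this
      have hbase : G.diffPayoff p1 (p1 + 1) 2 = G.n - p1 :=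
        (aux_adj (G := G) hP hS (a := p1) (by omega) (by omega)).2
      rw [hdev, hbase] at hB
      omega
  · rintro ⟨hc, rfl⟩
    have hkey : G.n / 2 ≤ p1 ∧ p1 ≤ (G.n + 1) / 2 := by omega
    refine ⟨Finset.mem_Icc.2 ⟨by omega, by omega⟩, Finset.mem_Icc.2 ⟨by omega, by omega⟩, ?_, ?_⟩
    · intro q hq
      rw [TemporalGraph.V, Finset.mem_Icc] at hq
      rw [(aux_adj (G := G) hP hS (a := p1) (by omega) (by omega)).1]
      rcases lt_trichotomy q (p1 + 1) with h | h | h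
      · calc G.diffPayoff q (p1 + 1) 1
            ≤ (Finset.Icc 1 (p1 + 1 - 1)).card := Finset.card_le_card (aux_sub1_lt hP h)
          _ = p1 := by rw [Nat.card_Icc]; omega
      · subst h
        rw [aux_payoff_same (p1 + 1) 1 (Or.inl rfl)]
        omega
      · calc G.diffPayoff q (p1 + 1) 1
            ≤ (Finset.Icc (p1 + 1 + 1) G.n).card := Finset.card_le_card (aux_sub1_gt hP h)
          _ ≤ p1 := by rw [Nat.card_Icc]; omega
    · intro q hq
      rw [TemporalGraph.V, Finset.mem_Icc] at hq
      rw [(aux_adj (G := G) hP hS (a := p1) (by omega) (by omega)).2]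
      rcases lt_trichotomy q p1 with h | h | h
      · calc G.diffPayoff p1 q 2
            ≤ (Finset.Icc 1 (p1 - 1)).card := Finset.card_le_card (aux_sub2_lt hP h)
          _ ≤ G.n - p1 := by rw [Nat.card_Icc]; omega
      · rw [h, aux_payoff_same p1 2 (Or.inr rfl)]
        omega
      · calc G.diffPayoff p1 q 2
            ≤ (Finset.Icc (p1 + 1) G.n).card := Finset.card_le_card (aux_sub2_gt hP h)
          _ ≤ G.n - p1 := by rw [Nat.card_Icc]; omega
end

section
/- On every superset temporal linear forest F, the two-player temporal diffusion game Diff(F, 2) admits a Nash equilibrium. -/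
open Finset

namespace TemporalGraph

lemma diffStep_some {Vs : Finset ℕ} {Et : Finset (Sym2 ℕ)} {c : ℕ → Option ℕ} {v : ℕ} {i : ℕ}
    (h : c v = some i) : diffStep Vs Et c v = some i := by
  unfold diffStep; rw [h]

lemma diffStep_ne_none {Vs : Finset ℕ} {Et : Finset (Sym2 ℕ)} {c : ℕ → Option ℕ} {v : ℕ}
    (h : c v ≠ none) : diffStep Vs Et c v ≠ none := by
  obtain ⟨i, hi⟩ := Option.ne_none_iff_exists'.1 h
  rw [diffStep_some hi]; simp

lemma diffColoring_mono (G : TemporalGraph) (p1 p2 : ℕ) {t t' : ℕ} (h : t ≤ t') {v i : ℕ}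
    (hc : diffColoring G p1 p2 t v = some i) : diffColoring G p1 p2 t' v = some i := by
  induction t', h using Nat.le_induction with
  | base => exact hc
  | succ m hm ih => exact diffStep_some ih

lemma diffStep_eq_some {Vs : Finset ℕ} {Et : Finset (Sym2 ℕ)} {c : ℕ → Option ℕ} {v i : ℕ}
    (h : diffStep Vs Et c v = some i) :
    c v = some i ∨ (c v = none ∧ v ∈ Vs ∧
      ((i = 1 ∧ (∃ u, s(u,v) ∈ Et ∧ c u = some 1) ∧ ¬(∃ u, s(u,v) ∈ Et ∧ c u = some 2)) ∨
       (i = 2 ∧ (∃ u, s(u,v) ∈ Et ∧ c u = some 2) ∧ ¬(∃ u, s(u,v) ∈ Et ∧ c u = some 1)) ∨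
       (i = 0 ∧ (∃ u, s(u,v) ∈ Et ∧ c u = some 1) ∧ (∃ u, s(u,v) ∈ Et ∧ c u = some 2)))) := by
  unfold diffStep at h
  cases hc : c v with
  | some j =>
    rw [hc] at h
    have h' : some j = some i := h
    exact Or.inl h'
  | none => rw [hc] at h; split_ifs at h with h1 h2 h3 <;> simp_all

lemma diffStep_fire1 {Vs : Finset ℕ} {Et : Finset (Sym2 ℕ)} {c : ℕ → Option ℕ} {v : ℕ}
    (h0 : c v = none) (hv : v ∈ Vs)
    (h1 : ∃ u, s(u,v) ∈ Et ∧ c u = some 1) (h2 : ¬ ∃ u, s(u,v) ∈ Et ∧ c u = some 2) :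
    diffStep Vs Et c v = some 1 := by
  unfold diffStep; rw [h0]; rw [if_pos ⟨hv, h1, h2⟩]

lemma coloring_p1_ne_none (G : TemporalGraph) (p1 p2 : ℕ) (t : ℕ) :
    diffColoring G p1 p2 t p1 ≠ none := by
  induction t with
  | zero =>
    show diffInit p1 p2 p1 ≠ none
    unfold diffInit; split_ifs <;> simp_all
  | succ m ih => exact diffStep_ne_none ih

lemma coloring_p2_ne_none (G : TemporalGraph) (p1 p2 : ℕ) (t : ℕ) :
    diffColoring G p1 p2 t p2 ≠ none := by
  induction t with
  | zero =>
    show diffInit p1 p2 p2 ≠ none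
    unfold diffInit; split_ifs <;> simp_all
  | succ m ih => exact diffStep_ne_none ih

lemma coloring_p1_self (G : TemporalGraph) {p1 p2 : ℕ} (hne : p1 ≠ p2) (t : ℕ) :
    diffColoring G p1 p2 t p1 = some 1 := by
  have : diffColoring G p1 p2 0 p1 = some 1 := by
    show diffInit p1 p2 p1 = some 1
    unfold diffInit; split_ifs <;> simp_all
  exact diffColoring_mono G p1 p2 (Nat.zero_le t) this

lemma coloring_p2_self (G : TemporalGraph) {p1 p2 : ℕ} (hne : p1 ≠ p2) (t : ℕ) :
    diffColoring G p1 p2 t p2 = some 2 := by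
  have : diffColoring G p1 p2 0 p2 = some 2 := by
    show diffInit p1 p2 p2 = some 2
    unfold diffInit; split_ifs <;> simp_all
  exact diffColoring_mono G p1 p2 (Nat.zero_le t) this

lemma layer_subset_underlying (G : TemporalGraph) {t : ℕ} (ht : 1 ≤ t) :
    G.layer t ⊆ G.underlying := by
  unfold layer underlying
  split_ifs with h
  · exact fun e he => Finset.mem_biUnion.2 ⟨t, Finset.mem_Icc.2 ⟨ht, h⟩, he⟩
  · exact fun e he => Finset.mem_biUnion.2 ⟨G.tau, Finset.mem_Icc.2 ⟨G.htau, le_rfl⟩, he⟩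

lemma adj_of_layer (G : TemporalGraph) (hF : G.IsLinearForest) {u v t : ℕ} (ht : 1 ≤ t)
    (h : s(u,v) ∈ G.layer t) : G.underlyingGraph.Adj u v := by
  have hm := layer_subset_underlying G ht h
  have hd := (hF.1 _ hm).1
  refine (⟨fun he => hd ?_, hm⟩ : u ≠ v ∧ s(u, v) ∈ G.underlying)
  rw [he]; exact Sym2.mk_isDiag_iff.2 rfl

lemma mem_V_of_adj (G : TemporalGraph) (hF : G.IsLinearForest) {u v : ℕ}
    (h : G.underlyingGraph.Adj u v) : u ∈ G.V ∧ v ∈ G.V := by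
  have := (hF.1 _ (show u ≠ v ∧ s(u, v) ∈ G.underlying from h).2).2
  exact ⟨this u (Sym2.mem_mk_left u v), this v (Sym2.mem_mk_right u v)⟩


lemma diff_inv1 (G : TemporalGraph) (hF : G.IsLinearForest) (p1 p2 : ℕ) :
    ∀ t v, (diffColoring G p1 p2 t v = some 1 ∨
        (p1 ≠ p2 ∧ diffColoring G p1 p2 t v = some 0)) →
      ∃ W : G.underlyingGraph.Walk p1 v, p2 ∉ W.support := by
  intro t
  induction t with
  | zero =>
    intro v hv
    have hv' : diffInit p1 p2 v = some 1 ∨ (p1 ≠ p2 ∧ diffInit p1 p2 v = some 0) := hv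
    unfold diffInit at hv'
    split_ifs at hv' with h1 h2 h3
    · rcases hv' with h | ⟨hne, _⟩
      · simp at h
      · exact absurd (h1.1.symm.trans h1.2) hne
    · rcases hv' with h | ⟨hne, h⟩
      · have hvp1 : v = p1 := h2
        subst hvp1
        have hne : p2 ≠ v := fun he => h1 ⟨rfl, he.symm⟩
        exact ⟨SimpleGraph.Walk.nil, by simp [SimpleGraph.Walk.support_nil]; exact fun e => hne e⟩
      · simp at h
    · rcases hv' with h | ⟨hne, h⟩ <;> simp_all
    · rcases hv' with h | ⟨hne, h⟩ <;> simp_all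
  | succ m ih =>
    intro v hv
    -- helper to build the walk from a witness u with color 1 at time m
    have build : diffColoring G p1 p2 m v = none →
        (∃ u, s(u,v) ∈ G.layer (m+1) ∧ diffColoring G p1 p2 m u = some 1) →
        ∃ W : G.underlyingGraph.Walk p1 v, p2 ∉ W.support := by
      rintro hnone ⟨u, hedge, hu⟩
      obtain ⟨W, hW⟩ := ih u (Or.inl hu)
      have hadj : G.underlyingGraph.Adj u v := adj_of_layer G hF (Nat.succ_le_succ (Nat.zero_le m)) hedge
      have hvp2 : v ≠ p2 := fun he => coloring_p2_ne_none G p1 p2 m (he ▸ hnone)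
      refine ⟨W.concat hadj, ?_⟩
      rw [SimpleGraph.Walk.support_concat]
      intro hmem
      rw [List.mem_append] at hmem
      rcases hmem with h | h
      · exact hW h
      · exact hvp2 (List.mem_singleton.1 h).symm
    rcases hv with hv | ⟨hne, hv⟩
    · rcases diffStep_eq_some hv with hold | ⟨hnone, _, hcase⟩
      · exact ih v (Or.inl hold)
      · rcases hcase with ⟨_, h1, _⟩ | ⟨h2, _, _⟩ | ⟨h0, _, _⟩
        · exact build hnone h1
        · exact absurd h2 (by norm_num)
        · exact absurd h0 (by norm_num)
    · rcases diffStep_eq_some hv with hold | ⟨hnone, _, hcase⟩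
      · exact ih v (Or.inr ⟨hne, hold⟩)
      · rcases hcase with ⟨h1, _, _⟩ | ⟨h2, _, _⟩ | ⟨_, h1, _⟩
        · exact absurd h1 (by norm_num)
        · exact absurd h2 (by norm_num)
        · exact build hnone h1


def swc : ℕ → ℕ := fun k => if k = 1 then 2 else if k = 2 then 1 else 0

lemma swc_map_one {o : Option ℕ} : Option.map swc o = some 1 ↔ o = some 2 := by
  cases o with
  | none => simp
  | some j =>
    simp only [Option.map_some, Option.some.injEq]
    unfold swc
    split_ifs with h1 h2 <;> simp_all

lemma swc_map_two {o : Option ℕ} : Option.map swc o = some 2 ↔ o = some 1 := by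
  cases o with
  | none => simp
  | some j =>
    simp only [Option.map_some, Option.some.injEq]
    unfold swc
    split_ifs with h1 h2 <;> simp_all

lemma swap_init (p1 p2 v : ℕ) : diffInit p2 p1 v = Option.map swc (diffInit p1 p2 v) := by
  unfold diffInit
  by_cases h1 : v = p1 <;> by_cases h2 : v = p2
  · have h12 : p1 = p2 := h1.symm.trans h2
    simp [h1, h2, h12, swc]
  · have h12 : ¬ p1 = p2 := fun e => h2 (h1.trans e)
    simp [h1, h2, h12, swc]
  · have h12 : ¬ p2 = p1 := fun e => h1 (h2.trans e)
    simp [h1, h2, h12, swc]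
  · simp [h1, h2]

open Classical in
lemma swap_step (Vs : Finset ℕ) (Et : Finset (Sym2 ℕ)) (c : ℕ → Option ℕ) (v : ℕ) :
    diffStep Vs Et (fun u => Option.map swc (c u)) v = Option.map swc (diffStep Vs Et c v) := by
  unfold diffStep
  cases hc : c v with
  | some j => simp [hc]
  | none =>
    have e1 : ∀ u, (Option.map swc (c u) = some 1) = (c u = some 2) := fun u => propext swc_map_one
    have e2 : ∀ u, (Option.map swc (c u) = some 2) = (c u = some 1) := fun u => propext swc_map_two
    simp only [hc, Option.map_none, e1, e2]
    by_cases hv : v ∈ Vs <;>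
      by_cases hA : ∃ u, s(u,v) ∈ Et ∧ c u = some 1 <;>
      by_cases hB : ∃ u, s(u,v) ∈ Et ∧ c u = some 2 <;>
      simp [hv, hA, hB, swc]

lemma swap_coloring (G : TemporalGraph) (p1 p2 : ℕ) (t : ℕ) :
    diffColoring G p2 p1 t = fun v => Option.map swc (diffColoring G p1 p2 t v) := by
  induction t with
  | zero => funext v; exact swap_init p1 p2 v
  | succ m ih =>
    funext v
    show diffStep G.V (G.layer (m+1)) (diffColoring G p2 p1 m) v = _
    rw [ih]
    exact swap_step G.V (G.layer (m+1)) (diffColoring G p1 p2 m) v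

lemma swap_payoff (G : TemporalGraph) (p1 p2 : ℕ) :
    diffPayoff G p1 p2 2 = diffPayoff G p2 p1 1 := by
  unfold diffPayoff
  congr 1
  apply Finset.filter_congr
  intro v _
  unfold diffFinal
  rw [swap_coloring G p1 p2 (G.tau + G.n)]
  simp only [eq_iff_iff]
  exact swc_map_one.symm


lemma diffColoring_range (G : TemporalGraph) (p1 p2 : ℕ) :
    ∀ t v j, diffColoring G p1 p2 t v = some j → j = 0 ∨ j = 1 ∨ j = 2 := by
  intro t
  induction t with
  | zero =>
    intro v j h
    have h' : diffInit p1 p2 v = some j := h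
    unfold diffInit at h'
    split_ifs at h' <;> simp_all
  | succ m ih =>
    intro v j h
    rcases diffStep_eq_some h with hold | ⟨_, _, hc⟩
    · exact ih v j hold
    · rcases hc with ⟨e, _, _⟩ | ⟨e, _, _⟩ | ⟨e, _, _⟩ <;> simp [e]

lemma diff_inv2 (G : TemporalGraph) (hF : G.IsLinearForest) (p1 p2 t v : ℕ)
    (h : diffColoring G p1 p2 t v = some 2 ∨ (p1 ≠ p2 ∧ diffColoring G p1 p2 t v = some 0)) :
    ∃ W : G.underlyingGraph.Walk p2 v, p1 ∉ W.support := by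
  rcases h with h | ⟨hne, h⟩
  · refine diff_inv1 G hF p2 p1 t v (Or.inl ?_)
    rw [swap_coloring G p1 p2 t]; simp only []; rw [h]; rfl
  · refine diff_inv1 G hF p2 p1 t v (Or.inr ⟨hne.symm, ?_⟩)
    rw [swap_coloring G p1 p2 t]; simp only []; rw [h]; rfl

lemma walk_support_V (G : TemporalGraph) (hF : G.IsLinearForest) :
    ∀ {a b : ℕ} (W : G.underlyingGraph.Walk a b), a ∈ G.V → ∀ w ∈ W.support, w ∈ G.V := by
  intro a b W
  induction W with
  | nil =>
    intro ha w hw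
    rw [SimpleGraph.Walk.support_nil] at hw
    rcases List.mem_singleton.1 hw with rfl
    exact ha
  | cons hadj P ih =>
    intro ha w hw
    rw [SimpleGraph.Walk.support_cons] at hw
    rcases List.mem_cons.1 hw with rfl | hw
    · exact ha
    · exact ih (mem_V_of_adj G hF hadj).2 w hw

lemma spread (G : TemporalGraph) (hF : G.IsLinearForest) (hS : G.Superset)
    {p1 p2 : ℕ} (hne : p1 ≠ p2) :
    ∀ {x v : ℕ} (P : G.underlyingGraph.Walk x v) (T : ℕ), G.tau ≤ T →
      diffColoring G p1 p2 T x = some 1 →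
      (∀ w ∈ P.support, w ∈ G.V ∧ ∀ W : G.underlyingGraph.Walk p2 w, p1 ∈ W.support) →
      diffColoring G p1 p2 (T + P.length) v = some 1 := by
  intro x v P
  induction P with
  | nil =>
    intro T hT hx _
    simpa using hx
  | @cons a b vv hadj P ih =>
    intro T hT hx hsup
    have hb : b ∈ P.support := SimpleGraph.Walk.start_mem_support P
    have hbmem : b ∈ (SimpleGraph.Walk.cons hadj P).support := by
      rw [SimpleGraph.Walk.support_cons]; exact List.mem_cons_of_mem a hb
    have hbV : b ∈ G.V := (hsup b hbmem).1
    have hbSep : ∀ W : G.underlyingGraph.Walk p2 b, p1 ∈ W.support := (hsup b hbmem).2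
    have hlayer : G.layer (T+1) = G.underlying := by
      unfold layer
      rw [if_neg (by omega)]
      exact hS
    have hb1 : diffColoring G p1 p2 (T+1) b = some 1 := by
      cases hcb : diffColoring G p1 p2 T b with
      | some j =>
        rcases diffColoring_range G p1 p2 T b j hcb with rfl | rfl | rfl
        · obtain ⟨W, hW⟩ := diff_inv2 G hF p1 p2 T b (Or.inr ⟨hne, hcb⟩)
          exact absurd (hbSep W) hW
        · exact diffStep_some hcb
        · obtain ⟨W, hW⟩ := diff_inv2 G hF p1 p2 T b (Or.inl hcb)
          exact absurd (hbSep W) hW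
      | none =>
        apply diffStep_fire1 hcb hbV
        · exact ⟨a, by rw [hlayer]; exact (show a ≠ b ∧ s(a, b) ∈ G.underlying from hadj).2, hx⟩
        · rintro ⟨u, hedge, hu2⟩
          obtain ⟨W, hW⟩ := diff_inv2 G hF p1 p2 T u (Or.inl hu2)
          have hadj2 : G.underlyingGraph.Adj u b :=
            adj_of_layer G hF (by omega) hedge
          have hbp1 : b ≠ p1 := fun he => coloring_p1_ne_none G p1 p2 T (he ▸ hcb)
          have := hbSep (W.concat hadj2)
          rw [SimpleGraph.Walk.support_concat, List.mem_append] at this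
          rcases this with h | h
          · exact hW h
          · exact hbp1 (List.mem_singleton.1 h).symm
    have hrec := ih (T+1) (by omega) hb1 (fun w hw => hsup w (by
      rw [SimpleGraph.Walk.support_cons]; exact List.mem_cons_of_mem a hw))
    have heq : (T+1) + P.length = T + (SimpleGraph.Walk.cons hadj P).length := by
      rw [SimpleGraph.Walk.length_cons]; omega
    rwa [heq] at hrec

lemma V_card (G : TemporalGraph) : G.V.card = G.n := by
  unfold V
  rw [Nat.card_Icc]
  omega

lemma final_spread (G : TemporalGraph) (hF : G.IsLinearForest) (hS : G.Superset)
    {p1 p2 v : ℕ} (hne : p1 ≠ p2) (hp1V : p1 ∈ G.V)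
    (hreach : G.underlyingGraph.Reachable p1 v)
    (hsep : ∀ W : G.underlyingGraph.Walk p2 v, p1 ∈ W.support) :
    diffFinal G p1 p2 v = some 1 := by
  obtain ⟨W0⟩ := hreach
  have hPpath : W0.bypass.IsPath := SimpleGraph.Walk.bypass_isPath W0
  set P := W0.bypass with hP
  have hsupV : ∀ w ∈ P.support, w ∈ G.V := walk_support_V G hF P hp1V
  have hsep' : ∀ w ∈ P.support, ∀ W : G.underlyingGraph.Walk p2 w, p1 ∈ W.support := by
    intro w hw W
    have hfull := hsep (W.append (P.dropUntil w hw))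
    rw [SimpleGraph.Walk.mem_support_append_iff] at hfull
    rcases hfull with h | h
    · exact h
    · by_cases hwp1 : w = p1
      · subst hwp1; exact SimpleGraph.Walk.end_mem_support W
      · exfalso
        have hnd := hPpath.support_nodup
        have hspec := SimpleGraph.Walk.take_spec P hw
        have : P.support = (P.takeUntil w hw).support ++ (P.dropUntil w hw).support.tail := by
          rw [← SimpleGraph.Walk.support_append, hspec]
        rw [this, List.nodup_append] at hnd
        have hp1take : p1 ∈ (P.takeUntil w hw).support := SimpleGraph.Walk.start_mem_support _
        have hdisj := hnd.2.2
        have hnotail : p1 ∉ (P.dropUntil w hw).support.tail := fun hmem => hdisj _ hp1take _ hmem rfl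
        rw [SimpleGraph.Walk.support_eq_cons] at h
        rcases List.mem_cons.1 h with he | he
        · exact hwp1 he.symm
        · exact hnotail he
  have hlen : P.length + 1 ≤ G.n := by
    have hnd := hPpath.support_nodup
    have h1 : P.support.toFinset.card = P.support.length := List.toFinset_card_of_nodup hnd
    have h2 : P.support.toFinset ⊆ G.V := fun w hw => hsupV w (List.mem_toFinset.1 hw)
    have h3 := Finset.card_le_card h2
    rw [h1, SimpleGraph.Walk.length_support] at h3
    rw [V_card] at h3
    exact h3
  have hcol := spread G hF hS hne P G.tau le_rfl (coloring_p1_self G hne G.tau)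
    (fun w hw => ⟨hsupV w hw, hsep' w hw⟩)
  exact diffColoring_mono G p1 p2 (by omega) hcol


/-- Vertices reachable from `a` by a walk avoiding `b`. -/
noncomputable def AvF (G : TemporalGraph) (a b : ℕ) : Finset ℕ :=
  @Finset.filter _ (fun v => ∃ W : G.underlyingGraph.Walk a v, b ∉ W.support)
    (Classical.decPred _) G.V

/-- The connected component of `a` (within `V`). -/
noncomputable def compF (G : TemporalGraph) (a : ℕ) : Finset ℕ :=
  @Finset.filter _ (fun v => G.underlyingGraph.Reachable a v) (Classical.decPred _) G.V

lemma mem_AvF (G : TemporalGraph) {a b v : ℕ} :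
    v ∈ AvF G a b ↔ v ∈ G.V ∧ ∃ W : G.underlyingGraph.Walk a v, b ∉ W.support := by
  unfold AvF; exact @Finset.mem_filter _ _ (Classical.decPred _) _ _

lemma mem_compF (G : TemporalGraph) {a v : ℕ} :
    v ∈ compF G a ↔ v ∈ G.V ∧ G.underlyingGraph.Reachable a v := by
  unfold compF; exact @Finset.mem_filter _ _ (Classical.decPred _) _ _

lemma AvF_subset_compF (G : TemporalGraph) (a b : ℕ) : AvF G a b ⊆ compF G a := by
  intro v hv
  rw [mem_AvF] at hv
  exact (mem_compF G).2 ⟨hv.1, ⟨hv.2.choose⟩⟩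

lemma compF_congr (G : TemporalGraph) {a b : ℕ} (h : G.underlyingGraph.Reachable a b) :
    compF G a = compF G b := by
  ext v
  rw [mem_compF, mem_compF]
  exact ⟨fun hr => ⟨hr.1, h.symm.trans hr.2⟩, fun hr => ⟨hr.1, h.trans hr.2⟩⟩

lemma self_mem_AvF (G : TemporalGraph) {a b : ℕ} (ha : a ∈ G.V) (hne : a ≠ b) :
    a ∈ AvF G a b :=
  (mem_AvF G).2 ⟨ha, SimpleGraph.Walk.nil, by
    rw [SimpleGraph.Walk.support_nil]
    exact fun hm => hne (List.mem_singleton.1 hm).symm⟩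

lemma not_mem_AvF_self (G : TemporalGraph) (a b : ℕ) : b ∉ AvF G a b := by
  intro h
  rw [mem_AvF] at h
  exact h.2.choose_spec (SimpleGraph.Walk.end_mem_support _)

lemma AvF_self_empty (G : TemporalGraph) (a : ℕ) : AvF G a a = ∅ := by
  ext v
  simp only [Finset.notMem_empty, iff_false]
  intro h
  rw [mem_AvF] at h
  exact h.2.choose_spec (SimpleGraph.Walk.start_mem_support _)

lemma self_mem_compF (G : TemporalGraph) {a : ℕ} (ha : a ∈ G.V) : a ∈ compF G a :=
  (mem_compF G).2 ⟨ha, SimpleGraph.Reachable.refl a⟩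

/-- Two walks to a common vertex, one from each endpoint of an edge, each avoiding the
other endpoint, contradict acyclicity. -/
lemma no_two_sided (G : TemporalGraph) (hA : G.underlyingGraph.IsAcyclic) {p q v : ℕ}
    (hadj : G.underlyingGraph.Adj p q)
    (W1 : G.underlyingGraph.Walk p v) (h1 : q ∉ W1.support)
    (W2 : G.underlyingGraph.Walk q v) (h2 : p ∉ W2.support) : False := by
  have hbr := (SimpleGraph.isAcyclic_iff_forall_adj_isBridge.mp hA) hadj
  rw [SimpleGraph.isBridge_iff] at hbr
  apply hbr
  rw [SimpleGraph.reachable_delete_edges_iff_exists_walk]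
  refine ⟨W1.append W2.reverse, ?_⟩
  intro hmem
  rw [SimpleGraph.Walk.edges_append, List.mem_append] at hmem
  rcases hmem with h | h
  · exact h1 (SimpleGraph.Walk.snd_mem_support_of_mem_edges W1 h)
  · rw [SimpleGraph.Walk.edges_reverse, List.mem_reverse] at h
    exact h2 (SimpleGraph.Walk.fst_mem_support_of_mem_edges W2 h)

lemma sep_of_avoid (G : TemporalGraph) (hA : G.underlyingGraph.IsAcyclic) {p q v : ℕ}
    (hadj : G.underlyingGraph.Adj p q)
    (W1 : G.underlyingGraph.Walk p v) (h1 : q ∉ W1.support) :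
    ∀ W : G.underlyingGraph.Walk q v, p ∈ W.support := by
  intro W
  by_contra h2
  exact no_two_sided G hA hadj W1 h1 W h2

lemma AvF_disjoint (G : TemporalGraph) (hA : G.underlyingGraph.IsAcyclic) {p q : ℕ}
    (hadj : G.underlyingGraph.Adj p q) : Disjoint (AvF G p q) (AvF G q p) := by
  rw [Finset.disjoint_left]
  intro v h1 h2
  rw [mem_AvF] at h1 h2
  obtain ⟨_, W1, hW1⟩ := h1
  obtain ⟨_, W2, hW2⟩ := h2
  exact no_two_sided G hA hadj W1 hW1 W2 hW2

/-- For an adjacent pair, the two avoid-sets partition the component. -/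
lemma AvF_union (G : TemporalGraph) (hA : G.underlyingGraph.IsAcyclic) {p q : ℕ}
    (hadj : G.underlyingGraph.Adj p q) :
    AvF G p q ∪ AvF G q p = compF G p := by
  apply Finset.Subset.antisymm
  · intro v hv
    rcases Finset.mem_union.1 hv with h | h
    · exact AvF_subset_compF G p q h
    · have := AvF_subset_compF G q p h
      rw [mem_compF] at this ⊢
      exact ⟨this.1, (SimpleGraph.Adj.reachable hadj).trans this.2⟩
  · intro v hv
    rw [mem_compF] at hv
    obtain ⟨hvV, ⟨W0⟩⟩ := hv
    have hPpath : W0.bypass.IsPath := SimpleGraph.Walk.bypass_isPath W0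
    set P := W0.bypass with hP
    by_cases hq : q ∈ P.support
    · refine Finset.mem_union_right _ ((mem_AvF G).2 ⟨hvV, P.dropUntil q hq, ?_⟩)
      have hnd := hPpath.support_nodup
      have hspec := SimpleGraph.Walk.take_spec P hq
      have hsupp : P.support = (P.takeUntil q hq).support ++ (P.dropUntil q hq).support.tail := by
        rw [← SimpleGraph.Walk.support_append, hspec]
      rw [hsupp, List.nodup_append] at hnd
      intro hmem
      rw [SimpleGraph.Walk.support_eq_cons] at hmem
      rcases List.mem_cons.1 hmem with he | he
      · exact hadj.ne he
      · exact hnd.2.2 _ (SimpleGraph.Walk.start_mem_support _) _ he rfl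
    · exact Finset.mem_union_left _ ((mem_AvF G).2 ⟨hvV, P, hq⟩)

lemma AvF_card_partition (G : TemporalGraph) (hA : G.underlyingGraph.IsAcyclic) {p q : ℕ}
    (hadj : G.underlyingGraph.Adj p q) :
    (AvF G p q).card + (AvF G q p).card = (compF G p).card := by
  rw [← Finset.card_union_of_disjoint (AvF_disjoint G hA hadj), AvF_union G hA hadj]

/-- Branch containment: a walk from a second neighbour `r` of `p` avoiding `p` stays on
`p`'s side of the edge `{p, q}`, and avoids `p`. -/
lemma AvF_branch_subset (G : TemporalGraph) (hA : G.underlyingGraph.IsAcyclic) {p q r : ℕ}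
    (hadj : G.underlyingGraph.Adj p q) (hadjr : G.underlyingGraph.Adj p r) (hrq : r ≠ q) :
    AvF G r p ⊆ (AvF G p q).erase p := by
  intro v hv
  rw [mem_AvF] at hv
  obtain ⟨hvV, W, hW⟩ := hv
  have hvnp : v ≠ p := fun he => hW (he ▸ SimpleGraph.Walk.end_mem_support W)
  refine Finset.mem_erase.2 ⟨hvnp, (mem_AvF G).2 ⟨hvV, SimpleGraph.Walk.cons hadjr W, ?_⟩⟩
  rw [SimpleGraph.Walk.support_cons]
  intro hmem
  rcases List.mem_cons.1 hmem with he | hq'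
  · exact hadj.ne he.symm
  · -- q on the walk from r avoiding p: contradiction with the bridge {p,q}
    have hbr := (SimpleGraph.isAcyclic_iff_forall_adj_isBridge.mp hA) hadj
    rw [SimpleGraph.isBridge_iff] at hbr
    apply hbr
    rw [SimpleGraph.reachable_delete_edges_iff_exists_walk]
    refine ⟨SimpleGraph.Walk.cons hadjr (W.takeUntil q hq'), ?_⟩
    intro hmem2
    rw [SimpleGraph.Walk.edges_cons, List.mem_cons] at hmem2
    rcases hmem2 with he | he
    · rw [Sym2.eq_iff] at he
      rcases he with ⟨_, h2⟩ | ⟨_, h2⟩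
      · exact hrq h2.symm
      · exact hadj.ne h2.symm
    · exact (fun hp => hW (SimpleGraph.Walk.support_takeUntil_subset W hq' hp))
        (SimpleGraph.Walk.fst_mem_support_of_mem_edges _ he)

/-- Avoid-sets of two distinct neighbours of `q` (towards `q`) are disjoint. -/
lemma AvF_nbrs_disjoint (G : TemporalGraph) (hA : G.underlyingGraph.IsAcyclic) {q p r : ℕ}
    (hadj1 : G.underlyingGraph.Adj q p) (hadj2 : G.underlyingGraph.Adj q r) (hpr : p ≠ r) :
    Disjoint (AvF G p q) (AvF G r q) := by
  rw [Finset.disjoint_left]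
  intro v h1 h2
  rw [mem_AvF] at h1 h2
  obtain ⟨_, W1, hW1⟩ := h1
  obtain ⟨_, W2, hW2⟩ := h2
  have hbr := (SimpleGraph.isAcyclic_iff_forall_adj_isBridge.mp hA) hadj1.symm
  rw [SimpleGraph.isBridge_iff] at hbr
  apply hbr
  rw [SimpleGraph.reachable_delete_edges_iff_exists_walk]
  refine ⟨(W1.append W2.reverse).concat hadj2.symm, ?_⟩
  intro hmem
  rw [SimpleGraph.Walk.edges_concat, List.concat_eq_append, List.mem_append] at hmem
  rcases hmem with hmem | he
  · rw [SimpleGraph.Walk.edges_append, List.mem_append] at hmem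
    rcases hmem with h | h
    · exact hW1 (SimpleGraph.Walk.snd_mem_support_of_mem_edges W1 h)
    · rw [SimpleGraph.Walk.edges_reverse, List.mem_reverse] at h
      exact hW2 (SimpleGraph.Walk.snd_mem_support_of_mem_edges W2 h)
  · rw [List.mem_singleton, Sym2.eq_iff] at he
    rcases he with ⟨h1, _⟩ | ⟨h1, _⟩
    · exact hpr h1
    · exact hadj1.ne h1.symm

/-- Reduction to neighbours: deviating inside the component of `p` is dominated by
deviating to a neighbour of `p`. -/
lemma AvF_reduce_to_neighbor (G : TemporalGraph) {p r : ℕ} (hne : r ≠ p)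
    (hreach : G.underlyingGraph.Reachable p r) :
    ∃ r', G.underlyingGraph.Adj p r' ∧ AvF G r p ⊆ AvF G r' p := by
  obtain ⟨W0⟩ := hreach
  obtain ⟨x, hadj, W', hcons⟩ :=
    SimpleGraph.Walk.exists_eq_cons_of_ne (fun h => hne h.symm) W0.bypass
  have hpW' : p ∉ W'.support := by
    have hnd := (SimpleGraph.Walk.bypass_isPath W0).support_nodup
    rw [hcons, SimpleGraph.Walk.support_cons] at hnd
    exact (List.nodup_cons.1 hnd).1
  refine ⟨x, hadj, ?_⟩
  intro v hv
  rw [mem_AvF] at hv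
  obtain ⟨hvV, W, hW⟩ := hv
  refine (mem_AvF G).2 ⟨hvV, W'.append W, ?_⟩
  rw [SimpleGraph.Walk.mem_support_append_iff]
  rintro (h | h)
  · exact hpW' h
  · exact hW h


lemma AvF_subset_V (G : TemporalGraph) (a b : ℕ) : AvF G a b ⊆ G.V := by
  unfold AvF; exact @Finset.filter_subset _ _ (Classical.decPred _) _

lemma compF_subset_V (G : TemporalGraph) (a : ℕ) : compF G a ⊆ G.V := by
  unfold compF; exact @Finset.filter_subset _ _ (Classical.decPred _) _

lemma payoff1_le_AvF (G : TemporalGraph) (hF : G.IsLinearForest) (a b : ℕ) :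
    diffPayoff G a b 1 ≤ (AvF G a b).card := by
  unfold diffPayoff
  apply Finset.card_le_card
  intro v hv
  obtain ⟨hvV, hvc⟩ := Finset.mem_filter.1 hv
  obtain ⟨W, hW⟩ := diff_inv1 G hF a b (G.tau + G.n) v (Or.inl hvc)
  exact (mem_AvF G).2 ⟨hvV, W, hW⟩

lemma payoff2_le_AvF (G : TemporalGraph) (hF : G.IsLinearForest) (a b : ℕ) :
    diffPayoff G a b 2 ≤ (AvF G b a).card := by
  rw [swap_payoff]; exact payoff1_le_AvF G hF b a

lemma payoff1_ge (G : TemporalGraph) (hF : G.IsLinearForest) (hS : G.Superset)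
    {p1 p2 : ℕ} (hne : p1 ≠ p2) (hp1 : p1 ∈ G.V) {S : Finset ℕ} (hsub : S ⊆ G.V)
    (h : ∀ v ∈ S, G.underlyingGraph.Reachable p1 v ∧
        ∀ W : G.underlyingGraph.Walk p2 v, p1 ∈ W.support) :
    S.card ≤ diffPayoff G p1 p2 1 := by
  unfold diffPayoff
  apply Finset.card_le_card
  intro v hv
  exact Finset.mem_filter.2 ⟨hsub hv, final_spread G hF hS hne hp1 (h v hv).1 (h v hv).2⟩

lemma payoff2_ge (G : TemporalGraph) (hF : G.IsLinearForest) (hS : G.Superset)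
    {p1 p2 : ℕ} (hne : p1 ≠ p2) (hp2 : p2 ∈ G.V) {S : Finset ℕ} (hsub : S ⊆ G.V)
    (h : ∀ v ∈ S, G.underlyingGraph.Reachable p2 v ∧
        ∀ W : G.underlyingGraph.Walk p1 v, p2 ∈ W.support) :
    S.card ≤ diffPayoff G p1 p2 2 := by
  rw [swap_payoff]
  exact payoff1_ge G hF hS hne.symm hp2 hsub h


lemma AvF_nonempty_card (G : TemporalGraph) {p q : ℕ} (hp : p ∈ G.V) (hne : p ≠ q) :
    1 ≤ (AvF G p q).card :=
  Finset.card_pos.2 ⟨p, self_mem_AvF G hp hne⟩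

/-- Main case: an oriented max-min edge `(p, q)` in a maximum-size component gives rise
to a Nash equilibrium. -/
lemma main_NE (G : TemporalGraph) (hF : G.IsLinearForest) (hS : G.Superset)
    {c0 p q : ℕ} (hc0V : c0 ∈ G.V)
    (hmaxcomp : ∀ r ∈ G.V, (compF G r).card ≤ (compF G c0).card)
    (hpV : p ∈ G.V) (hqV : q ∈ G.V)
    (hadj : G.underlyingGraph.Adj p q) (hcomp : G.underlyingGraph.Reachable c0 p)
    (hk : (AvF G p q).card ≤ (AvF G q p).card)
    (hmaxmin : ∀ a b : ℕ, a ∈ G.V → b ∈ G.V → G.underlyingGraph.Adj a b →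
      G.underlyingGraph.Reachable c0 a →
      min (AvF G a b).card (AvF G b a).card ≤ (AvF G p q).card) :
    ∃ p1 p2 : ℕ, G.diffNE p1 p2 := by
  have hA : G.underlyingGraph.IsAcyclic := hF.2.1
  set k := (AvF G p q).card with hkdef
  have hcompq : G.underlyingGraph.Reachable c0 q := hcomp.trans hadj.reachable
  have hk1 : 1 ≤ k := AvF_nonempty_card G hpV hadj.ne
  -- all branches at q are at most k
  have hNBR : ∀ r : ℕ, G.underlyingGraph.Adj q r → (AvF G r q).card ≤ k := by
    intro r hqr
    by_cases hrp : r = p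
    · subst hrp; exact le_rfl
    · have hrV : r ∈ G.V := (mem_V_of_adj G hF hqr).2
      have hc0r : G.underlyingGraph.Reachable c0 r := hcompq.trans hqr.reachable
      have hpart := AvF_card_partition G hA hqr.symm
      -- (AvF r q).card + (AvF q r).card = (compF r).card
      have hcompr : compF G r = compF G p :=
        (compF_congr G hc0r).symm.trans (compF_congr G hcomp)
      rw [hcompr] at hpart
      have hmin := hmaxmin r q hrV hqV hqr.symm hc0r
      -- disjointness of the two branches plus q itself
      have hdisj := AvF_nbrs_disjoint G hA hadj.symm hqr (fun h => hrp h.symm)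
      have hqnotin : q ∉ AvF G p q ∪ AvF G r q := by
        rw [Finset.mem_union]
        rintro (h | h) <;> exact not_mem_AvF_self G _ _ h
      have hsubs : insert q (AvF G p q ∪ AvF G r q) ⊆ compF G p := by
        intro y hy
        rcases Finset.mem_insert.1 hy with rfl | hy
        · exact (mem_compF G).2 ⟨hqV, hadj.reachable⟩
        · rcases Finset.mem_union.1 hy with hy | hy
          · exact AvF_subset_compF G p q hy
          · have := AvF_subset_compF G r q hy
            rw [mem_compF] at this ⊢
            exact ⟨this.1, (hcomp.symm.trans hc0r).symm.symm.trans this.2⟩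
      have hcard1 := Finset.card_le_card hsubs
      rw [Finset.card_insert_of_notMem hqnotin,
        Finset.card_union_of_disjoint hdisj] at hcard1
      omega
  -- the size of the whole component of p
  set s := (compF G p).card with hsdef
  have hpart0 := AvF_card_partition G hA hadj
  -- branches at p other than q are at most k - 1
  have hNBRP : ∀ r : ℕ, G.underlyingGraph.Adj p r → r ≠ q →
      (AvF G r p).card ≤ k - 1 := by
    intro r hpr hrq
    have hsub := AvF_branch_subset G hA hadj hpr hrq
    have := Finset.card_le_card hsub
    rw [Finset.card_erase_of_mem (self_mem_AvF G hpV hadj.ne)] at this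
    exact this
  -- bound for T: other components
  set OC := @Finset.filter _ (fun w => ¬ G.underlyingGraph.Reachable c0 w)
    (Classical.decPred _) G.V with hOC
  set T := OC.sup (fun w => (compF G w).card) with hT
  have hmemOC : ∀ {w : ℕ}, w ∈ OC ↔ w ∈ G.V ∧ ¬ G.underlyingGraph.Reachable c0 w := by
    intro w
    rw [hOC]
    exact @Finset.mem_filter _ _ (Classical.decPred _) _ _
  have houtT : ∀ r ∈ G.V, ¬ G.underlyingGraph.Reachable c0 r → (compF G r).card ≤ T := by
    intro r hrV hnr
    exact Finset.le_sup (f := fun w => (compF G w).card) (hmemOC.2 ⟨hrV, hnr⟩)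
  -- deviation bound towards q
  have hDEVQ : ∀ r ∈ G.V, (AvF G r q).card ≤ max k T := by
    intro r hrV
    by_cases hrq : r = q
    · subst hrq; rw [AvF_self_empty]; simp
    · by_cases hreach : G.underlyingGraph.Reachable q r
      · obtain ⟨r', hr'adj, hsub⟩ := AvF_reduce_to_neighbor G hrq hreach
        exact le_trans (le_trans (Finset.card_le_card hsub) (hNBR r' hr'adj)) (le_max_left _ _)
      · have hnr : ¬ G.underlyingGraph.Reachable c0 r := fun h =>
          hreach (hcompq.symm.trans h)
        exact le_trans (le_trans (Finset.card_le_card (AvF_subset_compF G r q))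
          (houtT r hrV hnr)) (le_max_right _ _)
  -- deviation bound towards p
  have hDEVP : ∀ r ∈ G.V, (AvF G r p).card ≤ max (AvF G q p).card T := by
    intro r hrV
    by_cases hrp : r = p
    · subst hrp; rw [AvF_self_empty]; simp
    · by_cases hreach : G.underlyingGraph.Reachable p r
      · obtain ⟨r', hr'adj, hsub⟩ := AvF_reduce_to_neighbor G hrp hreach
        by_cases hr'q : r' = q
        · subst hr'q
          exact le_trans (Finset.card_le_card hsub) (le_max_left _ _)
        · have h1 := hNBRP r' hr'adj hr'q
          have h2 := le_trans (Finset.card_le_card hsub) h1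
          exact le_trans (le_trans h2 (by omega)) (le_max_left _ _)
      · have hnr : ¬ G.underlyingGraph.Reachable c0 r := fun h =>
          hreach (hcomp.symm.trans h)
        exact le_trans (le_trans (Finset.card_le_card (AvF_subset_compF G r p))
          (houtT r hrV hnr)) (le_max_right _ _)
  by_cases hTk : T ≤ k
  · -- equilibrium (p, q)
    refine ⟨p, q, hpV, hqV, ?_, ?_⟩
    · -- player 1 deviations
      intro r hrV
      have hub := le_trans (payoff1_le_AvF G hF r q) (hDEVQ r hrV)
      rw [max_eq_left hTk] at hub
      have hlb : (AvF G p q).card ≤ diffPayoff G p q 1 := by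
        apply payoff1_ge G hF hS hadj.ne hpV (AvF_subset_V G p q)
        intro v hv
        obtain ⟨hvV, W, hW⟩ := (mem_AvF G).1 hv
        exact ⟨⟨W⟩, sep_of_avoid G hA hadj W hW⟩
      omega
    · -- player 2 deviations
      intro r hrV
      have hub := le_trans (payoff2_le_AvF G hF p r) (hDEVP r hrV)
      have hmax : max (AvF G q p).card T = (AvF G q p).card := max_eq_left (le_trans hTk hk)
      rw [hmax] at hub
      have hlb : (AvF G q p).card ≤ diffPayoff G p q 2 := by
        apply payoff2_ge G hF hS hadj.ne hqV (AvF_subset_V G q p)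
        intro v hv
        obtain ⟨hvV, W, hW⟩ := (mem_AvF G).1 hv
        exact ⟨⟨W⟩, sep_of_avoid G hA hadj.symm W hW⟩
      omega
  · -- another component of size T > k exists: equilibrium (q, w)
    push_neg at hTk
    have hOCne : OC.Nonempty := by
      by_contra hemp
      rw [Finset.not_nonempty_iff_eq_empty] at hemp
      rw [hT, hemp] at hTk
      simp at hTk
    obtain ⟨w, hwOC, hwT⟩ := Finset.exists_mem_eq_sup OC hOCne (fun w => (compF G w).card)
    obtain ⟨hwV, hwnr⟩ := hmemOC.1 hwOC
    have hqw : q ≠ w := fun h => hwnr (h ▸ hcompq)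
    have hnreach : ∀ v : ℕ, G.underlyingGraph.Reachable q v →
        ¬ G.underlyingGraph.Reachable w v := by
      intro v hqv hwv
      exact hwnr (hcompq.trans (hqv.trans hwv.symm))
    refine ⟨q, w, hqV, hwV, ?_, ?_⟩
    · -- player 1 deviations
      intro r hrV
      have hub := le_trans (payoff1_le_AvF G hF r w)
        (le_trans (Finset.card_le_card (AvF_subset_compF G r w)) (hmaxcomp r hrV))
      have hlb : (compF G q).card ≤ diffPayoff G q w 1 := by
        apply payoff1_ge G hF hS hqw hqV (compF_subset_V G q)
        intro v hv
        obtain ⟨hvV, hvr⟩ := (mem_compF G).1 hv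
        exact ⟨hvr, fun W => absurd ⟨W⟩ (hnreach v hvr)⟩
      have hcompeq : compF G q = compF G c0 := (compF_congr G hcompq).symm
      rw [hcompeq] at hlb
      omega
    · -- player 2 deviations
      intro r hrV
      have hub := le_trans (payoff2_le_AvF G hF q r) (hDEVQ r hrV)
      rw [max_eq_right (le_of_lt hTk)] at hub
      have hlb : (compF G w).card ≤ diffPayoff G q w 2 := by
        apply payoff2_ge G hF hS hqw hwV (compF_subset_V G w)
        intro v hv
        obtain ⟨hvV, hvr⟩ := (mem_compF G).1 hv
        exact ⟨hvr, fun W => absurd hvr (hnreach v ⟨W⟩)⟩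
      omega


theorem stmt2' (G : TemporalGraph) (hF : G.IsLinearForest) (hS : G.Superset)
    (hn : 1 ≤ G.n) :
    ∃ p1 p2 : ℕ, G.diffNE p1 p2 := by
  classical
  have hV1 : (1:ℕ) ∈ G.V := by unfold TemporalGraph.V; rw [Finset.mem_Icc]; omega
  obtain ⟨c0, hc0V, hc0max⟩ :=
    Finset.exists_max_image G.V (fun v => (compF G v).card) ⟨1, hV1⟩
  by_cases hbig : 2 ≤ (compF G c0).card
  · -- find an adjacent pair inside the component of c0
    obtain ⟨a, ha, b, hb, hab⟩ := Finset.one_lt_card.1 hbig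
    have hvne : ∃ v, v ∈ compF G c0 ∧ v ≠ c0 := by
      by_cases hac : a = c0
      · exact ⟨b, hb, fun h => hab (hac.trans h.symm)⟩
      · exact ⟨a, ha, hac⟩
    obtain ⟨v, hvmem, hvne'⟩ := hvne
    obtain ⟨hvV, hvreach⟩ := (mem_compF G).1 hvmem
    obtain ⟨W⟩ := hvreach
    obtain ⟨x, hadjx, W', hcons⟩ :=
      SimpleGraph.Walk.exists_eq_cons_of_ne (fun h => hvne' h.symm) W
    set PR := @Finset.filter _ (fun pr : ℕ × ℕ =>
        G.underlyingGraph.Adj pr.1 pr.2 ∧ G.underlyingGraph.Reachable c0 pr.1)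
      (Classical.decPred _) (G.V ×ˢ G.V) with hPRdef
    have hmemPR : ∀ {pr : ℕ × ℕ}, pr ∈ PR ↔ (pr.1 ∈ G.V ∧ pr.2 ∈ G.V) ∧
        (G.underlyingGraph.Adj pr.1 pr.2 ∧ G.underlyingGraph.Reachable c0 pr.1) := by
      intro pr
      rw [hPRdef]
      rw [@Finset.mem_filter _ _ (Classical.decPred _) _ _, Finset.mem_product]
    have hPRne : PR.Nonempty :=
      ⟨(c0, x), hmemPR.2 ⟨⟨hc0V, (mem_V_of_adj G hF hadjx).2⟩, hadjx,
        SimpleGraph.Reachable.refl c0⟩⟩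
    obtain ⟨pr, hprPR, hprmax⟩ := Finset.exists_max_image PR
      (fun pr => min (AvF G pr.1 pr.2).card (AvF G pr.2 pr.1).card) hPRne
    obtain ⟨⟨hp1V, hp2V⟩, hpradj, hprreach⟩ := hmemPR.1 hprPR
    rcases le_total (AvF G pr.1 pr.2).card (AvF G pr.2 pr.1).card with hor | hor
    · apply main_NE G hF hS hc0V hc0max hp1V hp2V hpradj hprreach hor
      intro a' b' haV hbV hab' hreach'
      have h1 := hprmax (a', b') (hmemPR.2 ⟨⟨haV, hbV⟩, hab', hreach'⟩)
      simp only at h1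
      omega
    · apply main_NE G hF hS hc0V hc0max hp2V hp1V hpradj.symm
        (hprreach.trans hpradj.reachable) hor
      intro a' b' haV hbV hab' hreach'
      have h1 := hprmax (a', b') (hmemPR.2 ⟨⟨haV, hbV⟩, hab', hreach'⟩)
      simp only at h1
      omega
  · -- all components are singletons
    push_neg at hbig
    by_cases hn1 : G.n = 1
    · refine ⟨1, 1, hV1, hV1, ?_, ?_⟩ <;>
      · intro r hr
        have hr1 : r = 1 := by
          unfold TemporalGraph.V at hr
          rw [Finset.mem_Icc] at hr
          omega
        subst hr1
        exact le_rfl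
    · have h2V : (2:ℕ) ∈ G.V := by
        unfold TemporalGraph.V; rw [Finset.mem_Icc]; omega
      have h12 : (1:ℕ) ≠ 2 := by omega
      refine ⟨1, 2, hV1, h2V, ?_, ?_⟩
      · intro r hrV
        have hub := le_trans (payoff1_le_AvF G hF r 2)
          (le_trans (Finset.card_le_card (AvF_subset_compF G r 2)) (hc0max r hrV))
        have hlb : ({1} : Finset ℕ).card ≤ diffPayoff G 1 2 1 := by
          apply payoff1_ge G hF hS h12 hV1 (Finset.singleton_subset_iff.2 hV1)
          intro u hu
          rw [Finset.mem_singleton] at hu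
          subst hu
          exact ⟨SimpleGraph.Reachable.refl 1, fun W => SimpleGraph.Walk.end_mem_support W⟩
        rw [Finset.card_singleton] at hlb
        omega
      · intro r hrV
        have hub := le_trans (payoff2_le_AvF G hF 1 r)
          (le_trans (Finset.card_le_card (AvF_subset_compF G r 1)) (hc0max r hrV))
        have hlb : ({2} : Finset ℕ).card ≤ diffPayoff G 1 2 2 := by
          apply payoff2_ge G hF hS h12 h2V (Finset.singleton_subset_iff.2 h2V)
          intro u hu
          rw [Finset.mem_singleton] at hu
          subst hu
          exact ⟨SimpleGraph.Reachable.refl 2, fun W => SimpleGraph.Walk.end_mem_support W⟩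
        rw [Finset.card_singleton] at hlb
        omega

end TemporalGraph
open TemporalGraph

/-- Every superset temporal linear forest admits a Nash
equilibrium in the two-player temporal diffusion game. -/
theorem stmt2 (G : TemporalGraph) (hF : G.IsLinearForest) (hS : G.Superset)
    (hn : 1 ≤ G.n) :
    ∃ p1 p2 : ℕ, G.diffNE p1 p2 := by
  exact TemporalGraph.stmt2' G hF hS hn
end

section
/- There exists a monotonically shrinking temporal path consisting of two layers which differ in only one edge such that the two-player temporal diffusion game on it admits no Nash equilibrium. Concretely, for P = ([8], E_1, E_2) with E_1 = {{i, i+1} : i ∈ [7]} and E_2 = E_1 \ {{2,3}}, no strategy profile (p_1, p_2) ∈ [8] × [8] is a Nash equilibrium in Diff(P, 2). -/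
open Finset

open TemporalGraph

/-- The monotonically shrinking temporal path `P = ([8], E_1, E_2)` with
`E_1` the full path and `E_2 = E_1 \ {{2, 3}}`. -/
def P3 : TemporalGraph where
  n := 8
  tau := 2
  htau := by norm_num
  E := fun t => if t ≤ 1 then pathEdges 8 else pathEdges 8 \ {s(2, 3)}

lemma mem_pathEdges8 (a b : ℕ) : s(a,b) ∈ pathEdges 8 ↔
    ((a+1 = b ∧ 1 ≤ a ∧ b ≤ 8) ∨ (b+1 = a ∧ 1 ≤ b ∧ a ≤ 8)) := by
  simp only [pathEdges, Finset.mem_image, Finset.mem_Icc]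
  constructor
  · rintro ⟨i, hi, he⟩
    rw [Sym2.eq_iff] at he
    omega
  · intro h
    rcases h with ⟨h1, h2, h3⟩ | ⟨h1, h2, h3⟩
    · exact ⟨a, by omega, by rw [Sym2.eq_iff]; omega⟩
    · exact ⟨b, by omega, by rw [Sym2.eq_iff]; omega⟩

lemma mem_layerP3 (t u v : ℕ) : s(u,v) ∈ P3.layer (t+1) ↔
    (((u+1 = v ∧ 1 ≤ u ∧ v ≤ 8) ∨ (v+1 = u ∧ 1 ≤ v ∧ u ≤ 8)) ∧
      (t = 0 ∨ (¬(u = 2 ∧ v = 3) ∧ ¬(u = 3 ∧ v = 2)))) := by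
  have hd : ∀ w x : ℕ, s(w,x) ∈ pathEdges 8 \ {s(2,3)} ↔
      (((w+1 = x ∧ 1 ≤ w ∧ x ≤ 8) ∨ (x+1 = w ∧ 1 ≤ x ∧ w ≤ 8)) ∧
        (¬(w = 2 ∧ x = 3) ∧ ¬(w = 3 ∧ x = 2))) := by
    intro w x
    rw [Finset.mem_sdiff, Finset.mem_singleton, mem_pathEdges8, Sym2.eq_iff]
    omega
  rcases t with _ | _ | t
  · rw [show P3.layer 1 = pathEdges 8 from rfl, mem_pathEdges8]; omega
  · rw [show P3.layer 2 = pathEdges 8 \ {s(2,3)} from rfl, hd]; omega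
  · rw [show P3.layer (t+3) = pathEdges 8 \ {s(2,3)} from rfl, hd]; omega
def dInit (p1 p2 v : ℕ) : Option ℕ :=
  if v = p1 ∧ v = p2 then some 0 else if v = p1 then some 1 else if v = p2 then some 2 else none

def initList (p1 p2 : ℕ) : List (Option ℕ) :=
  [dInit p1 p2 1, dInit p1 p2 2, dInit p1 p2 3, dInit p1 p2 4,
   dInit p1 p2 5, dInit p1 p2 6, dInit p1 p2 7, dInit p1 p2 8]

def updv (t : ℕ) (c : List (Option ℕ)) (v : ℕ) : Option ℕ :=
  match c.getD (v-1) none with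
  | some i => some i
  | none =>
    if ((2 ≤ v ∧ (t = 1 ∨ v ≠ 3)) ∧ c.getD (v-2) none = some 1) ∨
       ((v ≤ 7 ∧ (t = 1 ∨ v ≠ 2)) ∧ c.getD v none = some 1) then
      (if ((2 ≤ v ∧ (t = 1 ∨ v ≠ 3)) ∧ c.getD (v-2) none = some 2) ∨
          ((v ≤ 7 ∧ (t = 1 ∨ v ≠ 2)) ∧ c.getD v none = some 2) then some 0 else some 1)
    else
      (if ((2 ≤ v ∧ (t = 1 ∨ v ≠ 3)) ∧ c.getD (v-2) none = some 2) ∨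
          ((v ≤ 7 ∧ (t = 1 ∨ v ≠ 2)) ∧ c.getD v none = some 2) then some 2 else none)

def stepList (t : ℕ) (c : List (Option ℕ)) : List (Option ℕ) :=
  [updv t c 1, updv t c 2, updv t c 3, updv t c 4, updv t c 5, updv t c 6, updv t c 7, updv t c 8]

def colList (p1 p2 : ℕ) : ℕ → List (Option ℕ)
  | 0 => initList p1 p2
  | t+1 => stepList (t+1) (colList p1 p2 t)

def mpay (p1 p2 i : ℕ) : ℕ :=
  ((Finset.Icc 1 8).filter (fun v => (colList p1 p2 10).getD (v-1) none = some i)).card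

lemma step_eq (t : ℕ) (c : ℕ → Option ℕ) (d : List (Option ℕ))
    (h : ∀ u, 1 ≤ u → u ≤ 8 → c u = d.getD (u-1) none)
    (v : ℕ) (hv1 : 1 ≤ v) (hv8 : v ≤ 8) :
    diffStep P3.V (P3.layer (t+1)) c v = updv (t+1) d v := by
  have hVm : v ∈ P3.V := by
    simp only [TemporalGraph.V, Finset.mem_Icc]
    exact ⟨hv1, hv8⟩
  have key : ∀ j : ℕ, (∃ u, s(u,v) ∈ P3.layer (t+1) ∧ c u = some j) ↔
      (((2 ≤ v ∧ (t+1 = 1 ∨ v ≠ 3)) ∧ d.getD (v-2) none = some j) ∨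
       ((v ≤ 7 ∧ (t+1 = 1 ∨ v ≠ 2)) ∧ d.getD v none = some j)) := by
    intro j
    constructor
    · rintro ⟨u, hm, hc⟩
      rw [mem_layerP3] at hm
      have hu : u = v - 1 ∨ u = v + 1 := by omega
      rcases hu with hu | hu
      · left
        refine ⟨by omega, ?_⟩
        rw [show v - 2 = u - 1 by omega, ← h u (by omega) (by omega)]
        exact hc
      · right
        refine ⟨by omega, ?_⟩
        rw [show v = u - 1 by omega, ← h u (by omega) (by omega)]
        exact hc
    · rintro (⟨hL, hc⟩ | ⟨hR, hc⟩)
      · refine ⟨v - 1, by rw [mem_layerP3]; omega, ?_⟩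
        rw [h (v-1) (by omega) (by omega), show v - 1 - 1 = v - 2 by omega]
        exact hc
      · refine ⟨v + 1, by rw [mem_layerP3]; omega, ?_⟩
        rw [h (v+1) (by omega) (by omega)]
        exact hc
  have hcv : c v = d.getD (v-1) none := h v hv1 hv8
  rw [updv, diffStep, hcv]
  cases hd : d.getD (v-1) none with
  | some i => simp
  | none =>
    by_cases e1 : ∃ u, s(u, v) ∈ P3.layer (t + 1) ∧ c u = some 1 <;>
      by_cases e2 : ∃ u, s(u, v) ∈ P3.layer (t + 1) ∧ c u = some 2
    · rw [if_neg (fun h => h.2.2 e2), if_neg (fun h => h.2.2 e1),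
        if_pos ⟨hVm, e1, e2⟩, if_pos ((key 1).mp e1), if_pos ((key 2).mp e2)]
    · rw [if_pos ⟨hVm, e1, e2⟩, if_pos ((key 1).mp e1),
        if_neg (fun h => e2 ((key 2).mpr h))]
    · rw [if_neg (fun h => e1 h.2.1), if_pos ⟨hVm, e2, e1⟩,
        if_neg (fun h => e1 ((key 1).mpr h)), if_pos ((key 2).mp e2)]
    · rw [if_neg (fun h => e1 h.2.1), if_neg (fun h => e2 h.2.1),
        if_neg (fun h => e1 h.2.1),
        if_neg (fun h => e1 ((key 1).mpr h)), if_neg (fun h => e2 ((key 2).mpr h))]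
lemma bridge (p1 p2 : ℕ) : ∀ t v, 1 ≤ v → v ≤ 8 →
    diffColoring P3 p1 p2 t v = (colList p1 p2 t).getD (v-1) none := by
  intro t
  induction t with
  | zero =>
    intro v h1 h8
    interval_cases v <;> rfl
  | succ t ih =>
    intro v h1 h8
    have hs : diffColoring P3 p1 p2 (t+1) v
        = diffStep P3.V (P3.layer (t+1)) (diffColoring P3 p1 p2 t) v := rfl
    rw [hs, step_eq t _ _ (fun u hu1 hu8 => ih u hu1 hu8) v h1 h8]
    interval_cases v <;> rfl

lemma payoff_eq_s3 (p1 p2 i : ℕ) : diffPayoff P3 p1 p2 i = mpay p1 p2 i := by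
  unfold diffPayoff mpay diffFinal
  congr 1
  apply Finset.filter_congr
  intro v hv
  have hv' : 1 ≤ v ∧ v ≤ 8 := by
    simpa [TemporalGraph.V, P3] using hv
  rw [show P3.tau + P3.n = 10 from rfl, bridge p1 p2 10 v hv'.1 hv'.2]

lemma keyfact : ∀ p1 ∈ Finset.Icc 1 8, ∀ p2 ∈ Finset.Icc 1 8,
    (∃ q ∈ Finset.Icc 1 8, mpay p1 p2 1 < mpay q p2 1) ∨
    (∃ q ∈ Finset.Icc 1 8, mpay p1 p2 2 < mpay p1 q 2) := by decide
/-- `P3` is a monotonically shrinking temporal path with two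
layers differing in exactly one edge, and no strategy profile is a Nash
equilibrium in `Diff(P3, 2)`. -/
theorem stmt3 :
    P3.IsPath ∧ P3.Shrinking ∧ P3.tau = 2 ∧ P3.E 1 \ P3.E 2 = {s(2, 3)} ∧
    ∀ p1 ∈ P3.V, ∀ p2 ∈ P3.V, ¬ P3.diffNE p1 p2 := by
  refine ⟨⟨by show (2:ℕ) ≤ 8; norm_num, ?_⟩, ?_, rfl, ?_, ?_⟩
  · -- underlying = pathEdges 8
    show (Finset.Icc 1 2).biUnion P3.E = pathEdges 8
    rw [show (Finset.Icc 1 2 : Finset ℕ) = {1, 2} from rfl]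
    rw [Finset.biUnion_insert, Finset.singleton_biUnion]
    show pathEdges 8 ∪ (pathEdges 8 \ {s(2,3)}) = pathEdges 8
    rw [Finset.union_eq_left.mpr Finset.sdiff_subset]
  · -- Shrinking
    intro i hi1 hi2
    have h2 : i < 2 := hi2
    have : i = 1 := by omega
    subst this
    show pathEdges 8 \ {s(2,3)} ⊆ pathEdges 8
    exact Finset.sdiff_subset
  · -- E1 \ E2
    show pathEdges 8 \ (pathEdges 8 \ {s(2,3)}) = {s(2,3)}
    have h23 : s(2,3) ∈ pathEdges 8 := by rw [mem_pathEdges8]; omega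
    rw [sdiff_sdiff_right_self, Finset.inf_eq_inter,
      Finset.inter_eq_right.mpr (Finset.singleton_subset_iff.mpr h23)]
  · -- no NE
    intro p1 hp1 p2 hp2 hne
    obtain ⟨_, _, h3, h4⟩ := hne
    have hp1' : p1 ∈ Finset.Icc 1 8 := hp1
    have hp2' : p2 ∈ Finset.Icc 1 8 := hp2
    rcases keyfact p1 hp1' p2 hp2' with ⟨q, hq, hlt⟩ | ⟨q, hq, hlt⟩
    · have := h3 q hq
      rw [payoff_eq_s3, payoff_eq_s3] at this
      omega
    · have := h4 q hq
      rw [payoff_eq_s3, payoff_eq_s3] at this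
      omega
end

section
/- There exists a superset temporal cycle on which the two-player temporal diffusion game admits no Nash equilibrium. Concretely, for every n ≥ 6, the superset temporal cycle C = ([n], E_1, …, E_n) with E_t = {{t, t+1}} for t ∈ [n−1] and E_n = {{n,1}} ∪ {{i, i+1} : i ∈ [n−1]} admits no Nash equilibrium in Diff(C, 2). -/
open Finset

open TemporalGraph

/-- The superset temporal cycle `C = ([n], E_1, …, E_n)` with `E_t = {{t, t+1}}`
for `t ∈ [n-1]` and `E_n` the full cycle. -/
def C4 (n : ℕ) (hn : 6 ≤ n) : TemporalGraph where
  n := n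
  tau := n
  htau := by omega
  E := fun t => if t < n then {s(t, t + 1)} else cycleEdges n

/-! ### Auxiliary machinery -/

namespace Stmt4Aux
open TemporalGraph

/-- Explicit description of the diffusion coloring on `C4 n` for `p1 < p2`. -/
def col (n p1 p2 t v : ℕ) : Option ℕ :=
  if 1 ≤ v ∧ v ≤ n then
    if v = p1 then some 1
    else if v = p2 then some 2
    else if p1 < v ∧ v < p2 ∧ v ≤ t + 1 then some 1
    else if v + 1 = p1 ∧ p1 ≤ t + 1 then some 1
    else if p2 < v ∧ v ≤ t + 1 then some 2
    else if v + 2 ≤ p1 ∧ p1 ≤ 2 * v ∧ n + p1 ≤ t + v + 2 then some 1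
    else if v + 2 ≤ p1 ∧ 2 * v + 2 ≤ p1 ∧ n + v ≤ t + 1 then some 2
    else if v + 2 ≤ p1 ∧ 2 * v + 1 = p1 ∧ n + v ≤ t + 1 then some 0
    else none
  else none

variable {n p1 p2 : ℕ}

lemma col1_iff (h1 : 1 ≤ p1) (h12 : p1 < p2) (h2 : p2 ≤ n) (t v : ℕ) :
    col n p1 p2 t v = some 1 ↔ (1 ≤ v ∧ v ≤ n) ∧
      (v = p1 ∨ (p1 < v ∧ v < p2 ∧ v ≤ t + 1) ∨ (v + 1 = p1 ∧ p1 ≤ t + 1) ∨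
        (v + 2 ≤ p1 ∧ p1 ≤ 2 * v ∧ n + p1 ≤ t + v + 2)) := by
  unfold col; split_ifs <;> simp <;> omega

lemma col2_iff (h1 : 1 ≤ p1) (h12 : p1 < p2) (h2 : p2 ≤ n) (t v : ℕ) :
    col n p1 p2 t v = some 2 ↔ (1 ≤ v ∧ v ≤ n) ∧
      (v = p2 ∨ (p2 < v ∧ v ≤ t + 1) ∨ (v + 2 ≤ p1 ∧ 2 * v + 2 ≤ p1 ∧ n + v ≤ t + 1)) := by
  unfold col; split_ifs <;> simp <;> omega

lemma col0_iff (h1 : 1 ≤ p1) (h12 : p1 < p2) (h2 : p2 ≤ n) (t v : ℕ) :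
    col n p1 p2 t v = some 0 ↔ (1 ≤ v ∧ v ≤ n) ∧
      (v + 2 ≤ p1 ∧ 2 * v + 1 = p1 ∧ n + v ≤ t + 1) := by
  unfold col; split_ifs <;> simp <;> omega

lemma col_range (t v i : ℕ) (h : col n p1 p2 t v = some i) : i ≤ 2 := by
  unfold col at h; split_ifs at h <;> simp only [Option.some.injEq, reduceCtorEq] at h <;> omega

lemma colnone_iff (h1 : 1 ≤ p1) (h12 : p1 < p2) (h2 : p2 ≤ n) (t v : ℕ) :
    col n p1 p2 t v = none ↔
      ¬ ((1 ≤ v ∧ v ≤ n) ∧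
        (v = p1 ∨ (p1 < v ∧ v < p2 ∧ v ≤ t + 1) ∨ (v + 1 = p1 ∧ p1 ≤ t + 1) ∨
          (v + 2 ≤ p1 ∧ p1 ≤ 2 * v ∧ n + p1 ≤ t + v + 2))) ∧
      ¬ ((1 ≤ v ∧ v ≤ n) ∧
        (v = p2 ∨ (p2 < v ∧ v ≤ t + 1) ∨ (v + 2 ≤ p1 ∧ 2 * v + 2 ≤ p1 ∧ n + v ≤ t + 1))) ∧
      ¬ ((1 ≤ v ∧ v ≤ n) ∧ (v + 2 ≤ p1 ∧ 2 * v + 1 = p1 ∧ n + v ≤ t + 1)) := by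
  rw [← col1_iff h1 h12 h2, ← col2_iff h1 h12 h2, ← col0_iff h1 h12 h2]
  rcases hc : col n p1 p2 t v with _ | i
  · simp
  · have hi := col_range t v i hc
    simp only [reduceCtorEq, false_iff, not_and, not_not, Option.some.injEq, not_true,
      not_false_iff, true_and, and_true, not_forall]
    omega

lemma col_mono (h1 : 1 ≤ p1) (h12 : p1 < p2) (h2 : p2 ≤ n) {t v i : ℕ}
    (h : col n p1 p2 t v = some i) : col n p1 p2 (t + 1) v = some i := by
  have hi : i ≤ 2 := col_range t v i h
  interval_cases i
  · rw [col0_iff h1 h12 h2] at h ⊢; omega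
  · rw [col1_iff h1 h12 h2] at h ⊢; omega
  · rw [col2_iff h1 h12 h2] at h ⊢; omega



lemma exists_single (a b v i : ℕ) (c : ℕ → Option ℕ) :
    (∃ u, s(u, v) ∈ ({s(a, b)} : Finset (Sym2 ℕ)) ∧ c u = some i) ↔
      ((v = b ∧ c a = some i) ∨ (v = a ∧ c b = some i)) := by
  constructor
  · rintro ⟨u, hu, hc⟩
    rw [Finset.mem_singleton, Sym2.eq_iff] at hu
    rcases hu with ⟨rfl, rfl⟩ | ⟨rfl, rfl⟩
    · exact Or.inl ⟨rfl, hc⟩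
    · exact Or.inr ⟨rfl, hc⟩
  · rintro (⟨rfl, hc⟩ | ⟨rfl, hc⟩)
    · exact ⟨a, by simp, hc⟩
    · exact ⟨b, by rw [Finset.mem_singleton, Sym2.eq_swap], hc⟩

lemma exists_cycle {n : ℕ} (hn : 6 ≤ n) {v : ℕ} (hv1 : 1 ≤ v) (hv2 : v ≤ n)
    (c : ℕ → Option ℕ) (i : ℕ) :
    (∃ u, s(u, v) ∈ cycleEdges n ∧ c u = some i) ↔
      ((v + 1 ≤ n ∧ c (v + 1) = some i) ∨ (2 ≤ v ∧ c (v - 1) = some i) ∨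
        (v = 1 ∧ c n = some i) ∨ (v = n ∧ c 1 = some i)) := by
  constructor
  · rintro ⟨u, hu, hc⟩
    simp only [cycleEdges, pathEdges, Finset.mem_insert, Finset.mem_image,
      Finset.mem_Icc, Sym2.eq_iff] at hu
    rcases hu with (⟨hu1, hu2⟩ | ⟨hu1, hu2⟩) | ⟨j, ⟨hj1, hj2⟩, (⟨hu1, hu2⟩ | ⟨hu1, hu2⟩)⟩
    · exact Or.inr (Or.inr (Or.inl ⟨hu2, hu1 ▸ hc⟩))
    · exact Or.inr (Or.inr (Or.inr ⟨hu2, hu1 ▸ hc⟩))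
    · refine Or.inr (Or.inl ⟨by omega, ?_⟩)
      have hvu : v - 1 = u := by omega
      rw [hvu]; exact hc
    · refine Or.inl ⟨by omega, ?_⟩
      have hvu : v + 1 = u := by omega
      rw [hvu]; exact hc
  · rintro (⟨hle, hc⟩ | ⟨hle, hc⟩ | ⟨rfl, hc⟩ | ⟨rfl, hc⟩)
    · refine ⟨v + 1, ?_, hc⟩
      simp only [cycleEdges, pathEdges, Finset.mem_insert, Finset.mem_image, Finset.mem_Icc]
      exact Or.inr ⟨v, ⟨hv1, by omega⟩, by rw [Sym2.eq_swap]⟩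
    · refine ⟨v - 1, ?_, hc⟩
      simp only [cycleEdges, pathEdges, Finset.mem_insert, Finset.mem_image, Finset.mem_Icc]
      refine Or.inr ⟨v - 1, ⟨by omega, by omega⟩, ?_⟩
      have : v - 1 + 1 = v := by omega
      rw [this]
    · exact ⟨n, by simp [cycleEdges], hc⟩
    · refine ⟨1, ?_, hc⟩
      simp only [cycleEdges, Finset.mem_insert]
      exact Or.inl (Sym2.eq_swap)


set_option maxHeartbeats 1000000 in
lemma col_step_path (h1 : 1 ≤ p1) (h12 : p1 < p2) (h2 : p2 ≤ n) {t : ℕ} (ht : t + 1 < n)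
    (v : ℕ) :
    diffStep (Finset.Icc 1 n) ({s(t + 1, t + 2)} : Finset (Sym2 ℕ)) (col n p1 p2 t) v =
      col n p1 p2 (t + 1) v := by
  rcases h : col n p1 p2 t v with _ | i
  · simp only [diffStep, h, Finset.mem_Icc, exists_single]
    rw [colnone_iff h1 h12 h2] at h
    have hne : ¬ (t + 2 = t + 1) := by omega
    have hne' : ¬ (t + 1 = t + 2) := by omega
    by_cases hv2 : v = t + 2
    · subst hv2
      have hr : 1 ≤ t + 2 ∧ t + 2 ≤ n := by omega
      by_cases e1 : col n p1 p2 t (t + 1) = some 1 <;>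
        by_cases e2 : col n p1 p2 t (t + 1) = some 2
      · rw [e1] at e2; exact absurd e2 (by simp)
      · simp only [hne, hr, e1, e2, false_and, and_false, false_or, or_false, true_and,
          and_true, not_false_iff, not_true, if_true, if_false, eq_self_iff_true]
        rw [col1_iff h1 h12 h2] at e1
        rw [col2_iff h1 h12 h2] at e2
        exact ((col1_iff h1 h12 h2 (t + 1) (t + 2)).2 (by omega)).symm
      · simp only [hne, hr, e1, e2, false_and, and_false, false_or, or_false, true_and,
          and_true, not_false_iff, not_true, if_true, if_false, eq_self_iff_true]
        rw [col1_iff h1 h12 h2] at e1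
        rw [col2_iff h1 h12 h2] at e2
        exact ((col2_iff h1 h12 h2 (t + 1) (t + 2)).2 (by omega)).symm
      · simp only [hne, hr, e1, e2, false_and, and_false, false_or, or_false, true_and,
          and_true, not_false_iff, not_true, if_true, if_false, eq_self_iff_true]
        rw [col1_iff h1 h12 h2] at e1
        rw [col2_iff h1 h12 h2] at e2
        exact ((colnone_iff h1 h12 h2 (t + 1) (t + 2)).2 (by omega)).symm
    · by_cases hv1 : v = t + 1
      · subst hv1
        have hr : 1 ≤ t + 1 ∧ t + 1 ≤ n := by omega
        by_cases e1 : col n p1 p2 t (t + 2) = some 1 <;>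
          by_cases e2 : col n p1 p2 t (t + 2) = some 2
        · rw [e1] at e2; exact absurd e2 (by simp)
        · simp only [hne', hr, e1, e2, false_and, and_false, false_or, or_false, true_and,
            and_true, not_false_iff, not_true, if_true, if_false, eq_self_iff_true]
          rw [col1_iff h1 h12 h2] at e1
          rw [col2_iff h1 h12 h2] at e2
          exact ((col1_iff h1 h12 h2 (t + 1) (t + 1)).2 (by omega)).symm
        · simp only [hne', hr, e1, e2, false_and, and_false, false_or, or_false, true_and,
            and_true, not_false_iff, not_true, if_true, if_false, eq_self_iff_true]
          rw [col1_iff h1 h12 h2] at e1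
          rw [col2_iff h1 h12 h2] at e2
          exact ((col2_iff h1 h12 h2 (t + 1) (t + 1)).2 (by omega)).symm
        · simp only [hne', hr, e1, e2, false_and, and_false, false_or, or_false, true_and,
            and_true, not_false_iff, not_true, if_true, if_false, eq_self_iff_true]
          rw [col1_iff h1 h12 h2] at e1
          rw [col2_iff h1 h12 h2] at e2
          exact ((colnone_iff h1 h12 h2 (t + 1) (t + 1)).2 (by omega)).symm
      · simp only [hv2, hv1, false_and, false_or, or_self, and_false]
        rw [if_neg (by simp), if_neg (by simp), if_neg (by simp)]
        exact ((colnone_iff h1 h12 h2 (t + 1) v).2 (by omega)).symm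
  · have := col_mono h1 h12 h2 h
    simp only [diffStep, h]
    exact this.symm

set_option maxHeartbeats 4000000 in
lemma col_step_cycle (hn : 6 ≤ n) (h1 : 1 ≤ p1) (h12 : p1 < p2) (h2 : p2 ≤ n) {t : ℕ}
    (ht : n ≤ t + 1) (v : ℕ) :
    diffStep (Finset.Icc 1 n) (cycleEdges n) (col n p1 p2 t) v = col n p1 p2 (t + 1) v := by
  rcases h : col n p1 p2 t v with _ | i
  · simp only [diffStep, h, Finset.mem_Icc]
    rw [colnone_iff h1 h12 h2] at h
    by_cases hvr : 1 ≤ v ∧ v ≤ n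
    · simp only [exists_cycle hn hvr.1 hvr.2]
      have hvn : ¬ (v = n) := by omega
      have hvp : v + 2 ≤ p1 := by omega
      by_cases hv1 : v = 1
      · subst hv1
        have hn1 : ¬ ((1:ℕ) = n) := by omega
        have hN : col n p1 p2 t n = some 2 := (col2_iff h1 h12 h2 t n).2 (by omega)
        rcases hb : col n p1 p2 t (1 + 1) with _ | j
        · simp [hN, hn1, show 1 ≤ n by omega, show 2 ≤ n by omega, show ¬ n < 2 by omega]
          rw [colnone_iff h1 h12 h2] at hb
          rw [col2_iff h1 h12 h2] at hN
          exact ((col2_iff h1 h12 h2 (t + 1) 1).2 (by omega)).symm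
        · have hj := col_range _ _ _ hb
          interval_cases j
          · simp [hN, hn1, show 1 ≤ n by omega, show 2 ≤ n by omega, show ¬ n < 2 by omega]
            rw [col0_iff h1 h12 h2] at hb
            rw [col2_iff h1 h12 h2] at hN
            exact ((col2_iff h1 h12 h2 (t + 1) 1).2 (by omega)).symm
          · simp [hN, hn1, show 1 ≤ n by omega, show 2 ≤ n by omega, show ¬ n < 2 by omega]
            rw [col1_iff h1 h12 h2] at hb
            rw [col2_iff h1 h12 h2] at hN
            exact ((col0_iff h1 h12 h2 (t + 1) 1).2 (by omega)).symm
          · simp [hN, hn1, show 1 ≤ n by omega, show 2 ≤ n by omega, show ¬ n < 2 by omega]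
            rw [col2_iff h1 h12 h2] at hb
            rw [col2_iff h1 h12 h2] at hN
            exact ((col2_iff h1 h12 h2 (t + 1) 1).2 (by omega)).symm
      · have h2v : 2 ≤ v := by omega
        have hv1n : v + 1 ≤ n := by omega
        rcases hb : col n p1 p2 t (v + 1) with _ | j
        · rcases hb' : col n p1 p2 t (v - 1) with _ | k
          · simp [hvn, hv1, h2v, hv1n, show 1 ≤ v by omega, show v ≤ n by omega]
            rw [colnone_iff h1 h12 h2] at hb
            rw [colnone_iff h1 h12 h2] at hb'
            exact ((colnone_iff h1 h12 h2 (t + 1) v).2 (by omega)).symm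
          · have hk := col_range _ _ _ hb'
            interval_cases k
            · simp [hvn, hv1, h2v, hv1n, show 1 ≤ v by omega, show v ≤ n by omega]
              rw [colnone_iff h1 h12 h2] at hb
              rw [col0_iff h1 h12 h2] at hb'
              exact ((colnone_iff h1 h12 h2 (t + 1) v).2 (by omega)).symm
            · simp [hvn, hv1, h2v, hv1n, show 1 ≤ v by omega, show v ≤ n by omega]
              rw [colnone_iff h1 h12 h2] at hb
              rw [col1_iff h1 h12 h2] at hb'
              exact ((col1_iff h1 h12 h2 (t + 1) v).2 (by omega)).symm
            · simp [hvn, hv1, h2v, hv1n, show 1 ≤ v by omega, show v ≤ n by omega]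
              rw [colnone_iff h1 h12 h2] at hb
              rw [col2_iff h1 h12 h2] at hb'
              exact ((col2_iff h1 h12 h2 (t + 1) v).2 (by omega)).symm
        · have hj := col_range _ _ _ hb
          interval_cases j
          · rcases hb' : col n p1 p2 t (v - 1) with _ | k
            · simp [hvn, hv1, h2v, hv1n, show 1 ≤ v by omega, show v ≤ n by omega]
              rw [col0_iff h1 h12 h2] at hb
              rw [colnone_iff h1 h12 h2] at hb'
              exact ((colnone_iff h1 h12 h2 (t + 1) v).2 (by omega)).symm
            · have hk := col_range _ _ _ hb'
              interval_cases k
              · simp [hvn, hv1, h2v, hv1n, show 1 ≤ v by omega, show v ≤ n by omega]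
                rw [col0_iff h1 h12 h2] at hb
                rw [col0_iff h1 h12 h2] at hb'
                exact ((colnone_iff h1 h12 h2 (t + 1) v).2 (by omega)).symm
              · simp [hvn, hv1, h2v, hv1n, show 1 ≤ v by omega, show v ≤ n by omega]
                rw [col0_iff h1 h12 h2] at hb
                rw [col1_iff h1 h12 h2] at hb'
                exact ((col1_iff h1 h12 h2 (t + 1) v).2 (by omega)).symm
              · simp [hvn, hv1, h2v, hv1n, show 1 ≤ v by omega, show v ≤ n by omega]
                rw [col0_iff h1 h12 h2] at hb
                rw [col2_iff h1 h12 h2] at hb'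
                exact ((col2_iff h1 h12 h2 (t + 1) v).2 (by omega)).symm
          · rcases hb' : col n p1 p2 t (v - 1) with _ | k
            · simp [hvn, hv1, h2v, hv1n, show 1 ≤ v by omega, show v ≤ n by omega]
              rw [col1_iff h1 h12 h2] at hb
              rw [colnone_iff h1 h12 h2] at hb'
              exact ((col1_iff h1 h12 h2 (t + 1) v).2 (by omega)).symm
            · have hk := col_range _ _ _ hb'
              interval_cases k
              · simp [hvn, hv1, h2v, hv1n, show 1 ≤ v by omega, show v ≤ n by omega]
                rw [col1_iff h1 h12 h2] at hb
                rw [col0_iff h1 h12 h2] at hb'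
                exact ((col1_iff h1 h12 h2 (t + 1) v).2 (by omega)).symm
              · simp [hvn, hv1, h2v, hv1n, show 1 ≤ v by omega, show v ≤ n by omega]
                rw [col1_iff h1 h12 h2] at hb
                rw [col1_iff h1 h12 h2] at hb'
                exact ((col1_iff h1 h12 h2 (t + 1) v).2 (by omega)).symm
              · simp [hvn, hv1, h2v, hv1n, show 1 ≤ v by omega, show v ≤ n by omega]
                rw [col1_iff h1 h12 h2] at hb
                rw [col2_iff h1 h12 h2] at hb'
                exact ((col0_iff h1 h12 h2 (t + 1) v).2 (by omega)).symm
          · rcases hb' : col n p1 p2 t (v - 1) with _ | k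
            · simp [hvn, hv1, h2v, hv1n, show 1 ≤ v by omega, show v ≤ n by omega]
              rw [col2_iff h1 h12 h2] at hb
              rw [colnone_iff h1 h12 h2] at hb'
              exact ((col2_iff h1 h12 h2 (t + 1) v).2 (by omega)).symm
            · have hk := col_range _ _ _ hb'
              interval_cases k
              · simp [hvn, hv1, h2v, hv1n, show 1 ≤ v by omega, show v ≤ n by omega]
                rw [col2_iff h1 h12 h2] at hb
                rw [col0_iff h1 h12 h2] at hb'
                exact ((col2_iff h1 h12 h2 (t + 1) v).2 (by omega)).symm
              · simp [hvn, hv1, h2v, hv1n, show 1 ≤ v by omega, show v ≤ n by omega]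
                rw [col2_iff h1 h12 h2] at hb
                rw [col1_iff h1 h12 h2] at hb'
                exact ((col0_iff h1 h12 h2 (t + 1) v).2 (by omega)).symm
              · simp [hvn, hv1, h2v, hv1n, show 1 ≤ v by omega, show v ≤ n by omega]
                rw [col2_iff h1 h12 h2] at hb
                rw [col2_iff h1 h12 h2] at hb'
                exact ((col2_iff h1 h12 h2 (t + 1) v).2 (by omega)).symm
    · rw [if_neg (fun hc => hvr (Finset.mem_Icc.1 hc.1)), if_neg (fun hc => hvr (Finset.mem_Icc.1 hc.1)), if_neg (fun hc => hvr (Finset.mem_Icc.1 hc.1))]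
      exact ((colnone_iff h1 h12 h2 (t + 1) v).2 (by omega)).symm
  · have := col_mono h1 h12 h2 h
    simp only [diffStep, h]
    exact this.symm

lemma layer_C4 (hn : 6 ≤ n) (s : ℕ) :
    (C4 n hn).layer s = if s < n then ({s(s, s + 1)} : Finset (Sym2 ℕ)) else cycleEdges n := by
  simp only [TemporalGraph.layer, C4]
  by_cases h : s < n
  · simp [h, h.le]
  · simp [h]

set_option maxHeartbeats 2000000 in
lemma col_init (h1 : 1 ≤ p1) (h12 : p1 < p2) (h2 : p2 ≤ n) :
    diffInit p1 p2 = col n p1 p2 0 := by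
  funext v
  unfold diffInit col
  split_ifs <;> first | rfl | (exfalso; omega)

lemma diffColoring_eq (hn : 6 ≤ n) (h1 : 1 ≤ p1) (h12 : p1 < p2) (h2 : p2 ≤ n) (t : ℕ) :
    diffColoring (C4 n hn) p1 p2 t = col n p1 p2 t := by
  induction t with
  | zero => rw [diffColoring]; exact col_init h1 h12 h2
  | succ t ih =>
    rw [diffColoring, ih, show (C4 n hn).V = Finset.Icc 1 n from rfl, layer_C4 hn]
    funext v
    by_cases hlt : t + 1 < n
    · rw [if_pos hlt]; exact col_step_path h1 h12 h2 hlt v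
    · rw [if_neg hlt]; exact col_step_cycle hn h1 h12 h2 (by omega) v

/-! ### Payoffs for `p1 < p2` -/

lemma payoff1_eq (hn : 6 ≤ n) (h1 : 1 ≤ p1) (h12 : p1 < p2) (h2 : p2 ≤ n) :
    diffPayoff (C4 n hn) p1 p2 1 = p2 - (p1 + 1) / 2 := by
  unfold diffPayoff diffFinal
  rw [show (C4 n hn).tau + (C4 n hn).n = n + n from rfl, diffColoring_eq hn h1 h12 h2,
    show (C4 n hn).V = Finset.Icc 1 n from rfl]
  have hset : (Finset.Icc 1 n).filter (fun v => col n p1 p2 (n + n) v = some 1)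
      = Finset.Icc ((p1 + 1) / 2) (p2 - 1) := by
    ext x
    simp only [Finset.mem_filter, Finset.mem_Icc, col1_iff h1 h12 h2]
    omega
  rw [hset, Nat.card_Icc]
  omega

lemma payoff2_eq (hn : 6 ≤ n) (h1 : 1 ≤ p1) (h12 : p1 < p2) (h2 : p2 ≤ n) :
    diffPayoff (C4 n hn) p1 p2 2 = (p1 - 2) / 2 + (n + 1 - p2) := by
  unfold diffPayoff diffFinal
  rw [show (C4 n hn).tau + (C4 n hn).n = n + n from rfl, diffColoring_eq hn h1 h12 h2,
    show (C4 n hn).V = Finset.Icc 1 n from rfl]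
  have hset : (Finset.Icc 1 n).filter (fun v => col n p1 p2 (n + n) v = some 2)
      = Finset.Icc 1 ((p1 - 2) / 2) ∪ Finset.Icc p2 n := by
    ext x
    simp only [Finset.mem_filter, Finset.mem_Icc, Finset.mem_union, col2_iff h1 h12 h2]
    omega
  rw [hset, Finset.card_union_of_disjoint, Nat.card_Icc, Nat.card_Icc]
  · omega
  · rw [Finset.disjoint_left]
    intro a ha hb
    rw [Finset.mem_Icc] at ha hb
    omega

/-! ### Color swap symmetry -/

def swapc : Option ℕ → Option ℕ :=
  Option.map (fun i => if i = 1 then 2 else if i = 2 then 1 else i)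

lemma swapc_none : swapc none = none := rfl

lemma swapc_eq_one {x : Option ℕ} : swapc x = some 1 ↔ x = some 2 := by
  cases x <;> simp [swapc] <;> split_ifs <;> omega

lemma swapc_eq_two {x : Option ℕ} : swapc x = some 2 ↔ x = some 1 := by
  cases x <;> simp [swapc] <;> split_ifs <;> omega

lemma diffStep_swap (V : Finset ℕ) (E : Finset (Sym2 ℕ)) {c c' : ℕ → Option ℕ}
    (hc : ∀ u, c' u = swapc (c u)) (v : ℕ) :
    diffStep V E c' v = swapc (diffStep V E c v) := by
  unfold diffStep
  have H1 : (∃ u, s(u, v) ∈ E ∧ c' u = some 1) ↔ ∃ u, s(u, v) ∈ E ∧ c u = some 2 :=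
    exists_congr fun u => and_congr_right fun _ => by rw [hc]; exact swapc_eq_one
  have H2 : (∃ u, s(u, v) ∈ E ∧ c' u = some 2) ↔ ∃ u, s(u, v) ∈ E ∧ c u = some 1 :=
    exists_congr fun u => and_congr_right fun _ => by rw [hc]; exact swapc_eq_two
  rcases h : c v with _ | i
  · have hv' : c' v = none := by rw [hc, h, swapc_none]
    simp only [h, hv']
    by_cases hv : v ∈ V
    · by_cases h1 : ∃ u, s(u, v) ∈ E ∧ c u = some 1 <;>
        by_cases h2 : ∃ u, s(u, v) ∈ E ∧ c u = some 2
      · rw [if_neg (fun k => k.2.2 (H2.2 h1)), if_neg (fun k => k.2.2 (H1.2 h2)),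
          if_pos ⟨hv, H1.2 h2, H2.2 h1⟩, if_neg (fun k => k.2.2 h2),
          if_neg (fun k => k.2.2 h1), if_pos ⟨hv, h1, h2⟩]
        rfl
      · rw [if_neg (fun k => h2 (H1.1 k.2.1)), if_pos ⟨hv, H2.2 h1, fun k => h2 (H1.1 k)⟩,
          if_pos ⟨hv, h1, h2⟩]
        rfl
      · rw [if_pos ⟨hv, H1.2 h2, fun k => h1 (H2.1 k)⟩, if_neg (fun k => k.2.2 h2),
          if_pos ⟨hv, h2, h1⟩]
        rfl
      · rw [if_neg (fun k => h2 (H1.1 k.2.1)), if_neg (fun k => h1 (H2.1 k.2.1)),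
          if_neg (fun k => h2 (H1.1 k.2.1)), if_neg (fun k => h1 k.2.1),
          if_neg (fun k => h2 k.2.1), if_neg (fun k => h1 k.2.1)]
        rfl
    · rw [if_neg (fun k => hv k.1), if_neg (fun k => hv k.1), if_neg (fun k => hv k.1),
        if_neg (fun k => hv k.1), if_neg (fun k => hv k.1), if_neg (fun k => hv k.1)]
      rfl
  · have hv' : c' v = some (if i = 1 then 2 else if i = 2 then 1 else i) := by
      rw [hc, h]; rfl
    simp only [h, hv']
    simp [swapc]

lemma diffColoring_swap (G : TemporalGraph) (p1 p2 t : ℕ) :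
    diffColoring G p1 p2 t = fun v => swapc (diffColoring G p2 p1 t v) := by
  induction t with
  | zero =>
    funext v
    show diffInit p1 p2 v = swapc (diffInit p2 p1 v)
    unfold diffInit
    by_cases e1 : v = p1 <;> by_cases e2 : v = p2
    · have e3 : p1 = p2 := by rw [← e1, ← e2]
      simp [e1, e2, e3, swapc]
    · have e3 : ¬ p1 = p2 := fun hh => e2 (hh ▸ e1)
      have e4 : ¬ p2 = p1 := fun hh => e3 hh.symm
      simp [e1, e2, e3, e4, swapc]
    · have e3 : ¬ p1 = p2 := fun hh => e1 (hh ▸ e2)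
      have e4 : ¬ p2 = p1 := fun hh => e3 hh.symm
      simp [e1, e2, e3, e4, swapc]
    · simp [e1, e2, swapc]
  | succ t ih =>
    funext v
    rw [diffColoring, diffColoring]
    exact diffStep_swap _ _ (fun u => congrFun ih u) v

lemma diffPayoff_swap (G : TemporalGraph) (p1 p2 : ℕ) :
    diffPayoff G p1 p2 1 = diffPayoff G p2 p1 2 := by
  unfold diffPayoff diffFinal
  congr 1
  ext v
  rw [Finset.mem_filter, Finset.mem_filter, diffColoring_swap G p1 p2]
  simp only [swapc_eq_one]

lemma diffPayoff_swap' (G : TemporalGraph) (p1 p2 : ℕ) :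
    diffPayoff G p1 p2 2 = diffPayoff G p2 p1 1 := by
  unfold diffPayoff diffFinal
  congr 1
  ext v
  rw [Finset.mem_filter, Finset.mem_filter, diffColoring_swap G p1 p2]
  simp only [swapc_eq_two]

lemma diffNE_symm {G : TemporalGraph} {p1 p2 : ℕ} (h : diffNE G p1 p2) : diffNE G p2 p1 := by
  obtain ⟨hm1, hm2, hA, hB⟩ := h
  refine ⟨hm2, hm1, fun q hq => ?_, fun q hq => ?_⟩
  · rw [diffPayoff_swap G q p1, diffPayoff_swap G p2 p1]
    exact hB q hq
  · rw [diffPayoff_swap' G p2 q, diffPayoff_swap' G p2 p1]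
    exact hA q hq

/-! ### The degenerate profile -/

lemma diffInit_self_ne (p v i : ℕ) (hi : i = 1 ∨ i = 2) : diffInit p p v ≠ some i := by
  unfold diffInit
  split_ifs <;> simp <;> omega

lemma diffColoring_self (G : TemporalGraph) (p t : ℕ) :
    diffColoring G p p t = diffInit p p := by
  induction t with
  | zero => rfl
  | succ t ih =>
    rw [diffColoring, ih]
    funext v
    unfold diffStep
    rcases h : diffInit p p v with _ | i
    · have e1 : ¬ ∃ u, s(u, v) ∈ G.layer (t + 1) ∧ diffInit p p u = some 1 := by
        rintro ⟨u, -, hu⟩; exact diffInit_self_ne p u 1 (Or.inl rfl) hu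
      have e2 : ¬ ∃ u, s(u, v) ∈ G.layer (t + 1) ∧ diffInit p p u = some 2 := by
        rintro ⟨u, -, hu⟩; exact diffInit_self_ne p u 2 (Or.inr rfl) hu
      simp [h, e1, e2]
    · simp [h]

lemma payoff_self (G : TemporalGraph) (p : ℕ) : diffPayoff G p p 1 = 0 := by
  unfold diffPayoff diffFinal
  rw [diffColoring_self]
  rw [Finset.filter_eq_empty_iff.2 (fun v _ => diffInit_self_ne p v 1 (Or.inl rfl))]
  exact Finset.card_empty

/-! ### Structure of `C4` -/

lemma underlying_C4 (hn : 6 ≤ n) : (C4 n hn).underlying = cycleEdges n := by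
  apply Finset.Subset.antisymm
  · intro e he
    rw [TemporalGraph.underlying, Finset.mem_biUnion] at he
    obtain ⟨t, ht, he⟩ := he
    rw [Finset.mem_Icc] at ht
    by_cases hlt : t < n
    · have hE : (C4 n hn).E t = {s(t, t + 1)} := by simp [C4, hlt]
      rw [hE, Finset.mem_singleton] at he
      subst he
      rw [cycleEdges, Finset.mem_insert]
      right
      rw [pathEdges, Finset.mem_image]
      exact ⟨t, Finset.mem_Icc.2 ⟨ht.1, by omega⟩, rfl⟩
    · have hE : (C4 n hn).E t = cycleEdges n := by simp [C4, hlt]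
      rwa [hE] at he
  · intro e he
    rw [TemporalGraph.underlying, Finset.mem_biUnion]
    refine ⟨n, Finset.mem_Icc.2 ⟨by omega, le_refl n⟩, ?_⟩
    have hE : (C4 n hn).E n = cycleEdges n := by simp [C4]
    rwa [hE]

lemma superset_C4 (hn : 6 ≤ n) : (C4 n hn).Superset := by
  rw [TemporalGraph.Superset, underlying_C4 hn]
  simp [C4]

/-! ### No Nash equilibrium -/

lemma not_NE_of_lt (hn : 6 ≤ n) (h1 : 1 ≤ p1) (h12 : p1 < p2) (h2 : p2 ≤ n) :
    ¬ diffNE (C4 n hn) p1 p2 := by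
  rintro ⟨-, -, hA, hB⟩
  have memV : ∀ q, 1 ≤ q → q ≤ n → q ∈ (C4 n hn).V := fun q a b => Finset.mem_Icc.2 ⟨a, b⟩
  by_cases hc : p2 = p1 + 1
  · by_cases hp3 : 3 ≤ p1
    · have h := hA 1 (memV 1 (by omega) (by omega))
      rw [payoff1_eq hn (by omega) (by omega) h2, payoff1_eq hn h1 h12 h2] at h
      omega
    · have h := hA (p2 + 1) (memV _ (by omega) (by omega))
      rw [diffPayoff_swap, payoff2_eq hn (by omega) (by omega) (by omega),
        payoff1_eq hn h1 h12 h2] at h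
      omega
  · have h := hB (p1 + 1) (memV _ (by omega) (by omega))
    rw [payoff2_eq hn h1 (by omega) (by omega), payoff2_eq hn h1 h12 h2] at h
    omega

lemma not_NE_eq (hn : 6 ≤ n) {p : ℕ} (h1 : 1 ≤ p) (h2 : p ≤ n) : ¬ diffNE (C4 n hn) p p := by
  rintro ⟨-, -, hA, -⟩
  have memV : ∀ q, 1 ≤ q → q ≤ n → q ∈ (C4 n hn).V := fun q a b => Finset.mem_Icc.2 ⟨a, b⟩
  by_cases hp : p = 1
  · subst hp
    have h := hA 2 (memV 2 (by omega) (by omega))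
    rw [payoff_self, diffPayoff_swap, payoff2_eq hn (by omega) (by omega) (by omega)] at h
    omega
  · have h := hA 1 (memV 1 (by omega) (by omega))
    rw [payoff_self, payoff1_eq hn (by omega) (by omega) h2] at h
    omega

end Stmt4Aux

/-- For every `n ≥ 6`, `C4 n` is a superset temporal cycle and
no strategy profile is a Nash equilibrium in `Diff(C4 n, 2)`. -/
theorem stmt4 (n : ℕ) (hn : 6 ≤ n) :
    (C4 n hn).IsCycle ∧ (C4 n hn).Superset ∧
    ∀ p1 ∈ (C4 n hn).V, ∀ p2 ∈ (C4 n hn).V, ¬ (C4 n hn).diffNE p1 p2 := by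
  refine ⟨⟨by show 3 ≤ n; omega, Stmt4Aux.underlying_C4 hn⟩, Stmt4Aux.superset_C4 hn, ?_⟩
  intro p1 hp1 p2 hp2 hNE
  rw [show (C4 n hn).V = Finset.Icc 1 n from rfl, Finset.mem_Icc] at hp1 hp2
  rcases lt_trichotomy p1 p2 with h | h | h
  · exact Stmt4Aux.not_NE_of_lt hn hp1.1 h hp2.2 hNE
  · subst h
    exact Stmt4Aux.not_NE_eq hn hp1.1 hp1.2 hNE
  · exact Stmt4Aux.not_NE_of_lt hn hp2.1 h hp1.2 (Stmt4Aux.diffNE_symm hNE)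
end
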